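/- arXiv:2305.00684 — 5 statements merged into one kernel-verified Lean document; each statement's English description precedes it below -/
import Mathlib

section
/- Let d, T be positive integers, let η > 0, and let f^1, …, f^T ∈ ℝ^d be an arbitrary sequence of vectors. Let q^1 ∈ Δ^d be the uniform distribution on [d] and define the exponential-weights iterates by q^{t+1}(i) = q^t(i)·exp(η f^t(i)) / Σ_{j=1}^d q^t(j)·exp(η f^t(j)) for t = 1, …, T. Then for every q ∈ Δ^d: Σ_{t=1}^T ⟨q, f^t⟩ ≤ Σ_{t=1}^T ⟨q^{t+1}, f^t⟩ − (1/η) Σ_{t=1}^T KL(q^{t+1} ‖ q^t) + (1/η) KL(q ‖ q^1). -/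
open Finset

/-- Kullback–Leibler divergence between two finitely supported probability vectors,
with the convention `0 * log (0/q) = 0` (automatic since `Real.log 0 = 0`). -/
noncomputable def KLdiv {d : ℕ} (p q : Fin d → ℝ) : ℝ :=
  ∑ i, p i * Real.log (p i / q i)

/-!
Write `q' = expWeightsUpdate η g q`. Since `log (q' i / q i) = η g i - log Z` with `Z` the
normaliser, both `KL(q' ‖ q)` and `KL(p ‖ q) - KL(p ‖ q')` equal `η ⟨·, g⟩ - log Z`
(at `q'` and at `p` respectively), which gives the exact one-step identity
`η ⟨p, g⟩ + KL(p ‖ q') = η ⟨q', g⟩ - KL(q' ‖ q) + KL(p ‖ q)`.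
Summing over the rounds telescopes the `KL(p ‖ q^t)` terms, and Gibbs' inequality
`KL(p ‖ q^{T+1}) ≥ 0` turns the resulting identity into the bound.
-/

theorem Fin.sum_univ_castSucc_sub_succ {M : Type*} [AddCommGroup M] :
    ∀ {n : ℕ} (g : Fin (n + 1) → M),
      ∑ i : Fin n, (g i.castSucc - g i.succ) = g 0 - g (Fin.last n)
  | 0, g => by simp
  | n + 1, g => by
    rw [Fin.sum_univ_castSucc]
    simp only [Fin.succ_castSucc]
    rw [Fin.sum_univ_castSucc_sub_succ (fun i => g i.castSucc), Fin.castSucc_zero, Fin.succ_last]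
    abel

theorem Real.sub_le_mul_log_div {x y : ℝ} (hx : 0 ≤ x) (hy : 0 < y) :
    x - y ≤ x * Real.log (x / y) := by
  have h := Real.self_sub_one_le_mul_log (div_nonneg hx hy.le)
  calc x - y = y * (x / y - 1) := by field_simp
    _ ≤ y * (x / y * Real.log (x / y)) := mul_le_mul_of_nonneg_left h hy.le
    _ = x * Real.log (x / y) := by field_simp

namespace KLdiv

variable {d : ℕ}

theorem nonneg {p w : Fin d → ℝ} (hp : ∀ i, 0 ≤ p i) (hw : ∀ i, 0 < w i)
    (hsum : ∑ i, w i ≤ ∑ i, p i) : 0 ≤ KLdiv p w :=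
  calc 0 ≤ ∑ i, (p i - w i) := by rw [sum_sub_distrib]; linarith
    _ ≤ KLdiv p w := sum_le_sum fun i _ => Real.sub_le_mul_log_div (hp i) (hw i)

theorem sub_eq_sum_mul_log_div (p : Fin d → ℝ) {w w' : Fin d → ℝ} (hw : ∀ i, 0 < w i)
    (hw' : ∀ i, 0 < w' i) : KLdiv p w - KLdiv p w' = ∑ i, p i * Real.log (w' i / w i) := by
  rw [KLdiv, KLdiv, ← sum_sub_distrib]
  refine sum_congr rfl fun i _ => ?_
  rcases eq_or_ne (p i) 0 with h0 | h0
  · simp [h0]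
  · rw [Real.log_div h0 (hw i).ne', Real.log_div h0 (hw' i).ne',
      Real.log_div (hw' i).ne' (hw i).ne']
    ring

end KLdiv

noncomputable def expWeightsUpdate {d : ℕ} (η : ℝ) (g w : Fin d → ℝ) : Fin d → ℝ :=
  fun i => w i * Real.exp (η * g i) / ∑ j, w j * Real.exp (η * g j)

namespace expWeightsUpdate

variable {d : ℕ} (η : ℝ) (g : Fin d → ℝ) {w : Fin d → ℝ}

theorem normaliser_pos [Nonempty (Fin d)] (hw : ∀ i, 0 < w i) :
    0 < ∑ j, w j * Real.exp (η * g j) :=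
  sum_pos (fun j _ => mul_pos (hw j) (Real.exp_pos _)) univ_nonempty

theorem pos (hw : ∀ i, 0 < w i) (i : Fin d) : 0 < expWeightsUpdate η g w i :=
  have : Nonempty (Fin d) := ⟨i⟩
  div_pos (mul_pos (hw i) (Real.exp_pos _)) (normaliser_pos η g hw)

theorem sum_eq_one [Nonempty (Fin d)] (hw : ∀ i, 0 < w i) :
    ∑ i, expWeightsUpdate η g w i = 1 := by
  simp only [expWeightsUpdate]
  rw [← sum_div, div_self (normaliser_pos η g hw).ne']

theorem log_div (hw : ∀ i, 0 < w i) (i : Fin d) :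
    Real.log (expWeightsUpdate η g w i / w i) =
      η * g i - Real.log (∑ j, w j * Real.exp (η * g j)) := by
  have : Nonempty (Fin d) := ⟨i⟩
  simp only [expWeightsUpdate]
  rw [div_right_comm, mul_div_cancel_left₀ _ (hw i).ne',
    Real.log_div (Real.exp_pos _).ne' (normaliser_pos η g hw).ne', Real.log_exp]

theorem sum_mul_log_div (hw : ∀ i, 0 < w i) {v : Fin d → ℝ} (hv : ∑ i, v i = 1) :
    ∑ i, v i * Real.log (expWeightsUpdate η g w i / w i) =
      η * ∑ i, v i * g i - Real.log (∑ j, w j * Real.exp (η * g j)) := by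
  simp only [log_div η g hw, mul_sub, sum_sub_distrib, ← sum_mul, hv, one_mul, mul_sum]
  simp only [mul_left_comm]

theorem regret_identity [Nonempty (Fin d)] (hw : ∀ i, 0 < w i) {p : Fin d → ℝ}
    (hp : ∑ i, p i = 1) :
    η * ∑ i, p i * g i + KLdiv p (expWeightsUpdate η g w) =
      η * ∑ i, expWeightsUpdate η g w i * g i - KLdiv (expWeightsUpdate η g w) w
        + KLdiv p w := by
  have hdiff := KLdiv.sub_eq_sum_mul_log_div p hw (pos η g hw)
  have hself : KLdiv (expWeightsUpdate η g w) w =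
      ∑ i, expWeightsUpdate η g w i * Real.log (expWeightsUpdate η g w i / w i) := rfl
  rw [sum_mul_log_div η g hw hp] at hdiff
  rw [sum_mul_log_div η g hw (sum_eq_one η g hw)] at hself
  linarith

theorem iterate_pos {T : ℕ} {f : Fin T → Fin d → ℝ} {q : Fin (T + 1) → Fin d → ℝ}
    (hq : ∀ t, q t.succ = expWeightsUpdate η (f t) (q t.castSucc)) (h0 : ∀ i, 0 < q 0 i) :
    ∀ t i, 0 < q t i := by
  refine Fin.induction h0 fun t ih => ?_
  rw [hq]
  exact pos η (f t) ih

theorem iterate_sum_eq_one [Nonempty (Fin d)] {T : ℕ} {f : Fin T → Fin d → ℝ}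
    {q : Fin (T + 1) → Fin d → ℝ}
    (hq : ∀ t, q t.succ = expWeightsUpdate η (f t) (q t.castSucc)) (h0 : ∀ i, 0 < q 0 i)
    (h0_sum : ∑ i, q 0 i = 1) : ∀ t, ∑ i, q t i = 1 := by
  refine Fin.cases h0_sum fun t => ?_
  rw [hq]
  exact sum_eq_one η (f t) (iterate_pos η hq h0 _)

end expWeightsUpdate

theorem exp_weights_negKL_regret_general (d T : ℕ) (hd : 0 < d)
    (η : ℝ) (hη : 0 < η) (f : Fin T → Fin d → ℝ)
    (q : Fin (T + 1) → Fin d → ℝ)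
    (hq0 : ∀ i, q 0 i = 1 / d)
    (hstep : ∀ (t : Fin T) (i : Fin d),
      q t.succ i = q t.castSucc i * Real.exp (η * f t i) /
        ∑ j, q t.castSucc j * Real.exp (η * f t j))
    (p : Fin d → ℝ) (hp : p ∈ stdSimplex ℝ (Fin d)) :
    ∑ t : Fin T, ∑ i, p i * f t i ≤
      (∑ t : Fin T, ∑ i, q t.succ i * f t i)
        - (1 / η) * ∑ t : Fin T, KLdiv (q t.succ) (q t.castSucc)
        + (1 / η) * KLdiv p (q 0) := by
  have : Nonempty (Fin d) := Fin.pos_iff_nonempty.mp hd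
  have hupdate (t : Fin T) : q t.succ = expWeightsUpdate η (f t) (q t.castSucc) :=
    funext (hstep t)
  have hq0_pos (i : Fin d) : 0 < q 0 i := by rw [hq0]; positivity
  have hpos := expWeightsUpdate.iterate_pos η hupdate hq0_pos
  have hsum := expWeightsUpdate.iterate_sum_eq_one η hupdate hq0_pos
    (by simp [hq0, (Nat.cast_pos.mpr hd).ne'])
  have hstep_identity (t : Fin T) :
      η * ∑ i, p i * f t i + KLdiv p (q t.succ) =
        η * ∑ i, q t.succ i * f t i - KLdiv (q t.succ) (q t.castSucc)
          + KLdiv p (q t.castSucc) := by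
    rw [hupdate]; exact expWeightsUpdate.regret_identity η (f t) (hpos _) hp.2
  have htele := Fin.sum_univ_castSucc_sub_succ (fun t => KLdiv p (q t))
  have hgibbs : 0 ≤ KLdiv p (q (Fin.last T)) :=
    KLdiv.nonneg hp.1 (hpos _) (by rw [hsum, hp.2])
  have htotal : η * ∑ t, ∑ i, p i * f t i =
      η * ∑ t, ∑ i, q t.succ i * f t i - ∑ t : Fin T, KLdiv (q t.succ) (q t.castSucc)
        + (KLdiv p (q 0) - KLdiv p (q (Fin.last T))) := by
    rw [← htele, mul_sum, mul_sum, ← sum_sub_distrib, ← sum_add_distrib]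
    exact sum_congr rfl fun t _ => by linarith [hstep_identity t]
  rw [← mul_le_mul_iff_of_pos_left hη]
  linear_combination htotal + hgibbs +
    (∑ t : Fin T, KLdiv (q t.succ) (q t.castSucc) - KLdiv p (q 0)) * mul_one_div_cancel hη.ne'

/-- Lemma on exponential weights with negative-KL terms:
for exponential-weights iterates `q^1, …, q^{T+1}` started at the uniform
distribution with step size `η` on reward vectors `f^1, …, f^T`, every
comparator `p ∈ Δ^d` satisfies
`Σ_t ⟨p, f^t⟩ ≤ Σ_t ⟨q^{t+1}, f^t⟩ − (1/η) Σ_t KL(q^{t+1} ‖ q^t) + (1/η) KL(p ‖ q^1)`. -/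
theorem exp_weights_negKL_regret (d T : ℕ) (hd : 0 < d) (hT : 0 < T)
    (η : ℝ) (hη : 0 < η) (f : Fin T → Fin d → ℝ)
    (q : Fin (T + 1) → Fin d → ℝ)
    (hq0 : ∀ i, q 0 i = 1 / d)
    (hstep : ∀ (t : Fin T) (i : Fin d),
      q t.succ i = q t.castSucc i * Real.exp (η * f t i) /
        ∑ j, q t.castSucc j * Real.exp (η * f t j))
    (p : Fin d → ℝ) (hp : p ∈ stdSimplex ℝ (Fin d)) :
    ∑ t : Fin T, ∑ i, p i * f t i ≤
      (∑ t : Fin T, ∑ i, q t.succ i * f t i)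
        - (1 / η) * ∑ t : Fin T, KLdiv (q t.succ) (q t.castSucc)
        + (1 / η) * KLdiv p (q 0) :=
  exp_weights_negKL_regret_general d T hd η hη f q hq0 hstep p hp
end

section
/- Let K be a positive integer, let Σ, O be finite nonempty sets, and for each k ∈ [K] let Π'_k be a finite nonempty set. Fix η > 0, distributions q_k ∈ Δ(Π'_k), elements π*_k ∈ Π'_k, a kernel M : Σ → Δ(O), and reward functions c_k : Σ → ℝ for each k ∈ [K]. For π ∈ Δ(Σ) with π(σ) > 0 for all σ ∈ Σ, and g = (g_1, …, g_K) with g_k : Π'_k × Σ × O → ℝ, define Γ(π, g) := Σ_{σ} π(σ) Σ_{k=1}^K c_k(σ) + (1/η) Σ_{k=1}^K Σ_{σ} π(σ) Σ_{o} M(σ)(o) Σ_{π'_k ∈ Π'_k} q_k(π'_k) · [ exp( (η/π(σ)) · ( g_k(π'_k; σ, o) − g_k(π*_k; σ, o) ) ) − 1 ]. Then the map (π, g) ↦ Γ(π, g) is jointly convex on the product of the open simplex {π ∈ Δ(Σ) : π(σ) > 0 for all σ} with the vector space of all tuples g. -/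
/-!
`Γ` is a linear function of `π` plus a nonnegative combination of the terms
`π(σ) · (exp (η s / π(σ)) - 1)`, where `s = g_k(π'; σ, o) - g_k(π*_k; σ, o)` is linear in `g`.
Each such term is the perspective `(x, s) ↦ x f(s / x)` of the convex function
`f(u) = exp (η u) - 1`, composed with a linear map, and the perspective of a convex function is
jointly convex.
-/

open Finset

theorem ConvexOn.sum {𝕜 E β ι : Type*} [Semiring 𝕜] [PartialOrder 𝕜] [AddCommMonoid E] [SMul 𝕜 E]
    [AddCommMonoid β] [PartialOrder β] [IsOrderedAddMonoid β] [Module 𝕜 β]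
    {s : Set E} {t : Finset ι} {f : ι → E → β} (hs : Convex 𝕜 s)
    (hf : ∀ i ∈ t, ConvexOn 𝕜 s (f i)) : ConvexOn 𝕜 s fun x => ∑ i ∈ t, f i x := by
  classical
  induction t using Finset.induction_on with
  | empty => simpa only [sum_empty] using convexOn_const (0 : β) hs
  | insert i t hi ih =>
    simp only [sum_insert hi]
    exact (hf i (mem_insert_self i t)).add (ih fun j hj => hf j (mem_insert_of_mem hj))

theorem inv_smul_add_smul_eq {E : Type*} [AddCommGroup E] [Module ℝ E] {a b x y : ℝ}
    (hx : x ≠ 0) (hy : y ≠ 0) (u v : E) :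
    (a * x + b * y)⁻¹ • (a • u + b • v)
      = (a * x / (a * x + b * y)) • (x⁻¹ • u) + (b * y / (a * x + b * y)) • (y⁻¹ • v) := by
  simp only [smul_smul, smul_add]
  congr 2 <;> field_simp

theorem ConvexOn.perspective {E : Type*} [AddCommGroup E] [Module ℝ E] {s : Set E} {f : E → ℝ}
    (hf : ConvexOn ℝ s f) :
    ConvexOn ℝ {p : ℝ × E | 0 < p.1 ∧ p.1⁻¹ • p.2 ∈ s} fun p => p.1 * f (p.1⁻¹ • p.2) := by
  set C := {p : ℝ × E | 0 < p.1 ∧ p.1⁻¹ • p.2 ∈ s}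
  have combo : ∀ ⦃p⦄, p ∈ C → ∀ ⦃r⦄, r ∈ C → ∀ ⦃a b : ℝ⦄, 0 ≤ a → 0 ≤ b → a + b = 1 →
      a • p + b • r ∈ C ∧
        (a • p + b • r).1 * f ((a • p + b • r).1⁻¹ • (a • p + b • r).2)
          ≤ a • (p.1 * f (p.1⁻¹ • p.2)) + b • (r.1 * f (r.1⁻¹ • r.2)) := by
    rintro ⟨x, u⟩ ⟨hx, hu⟩ ⟨y, v⟩ ⟨hy, hv⟩ a b ha hb hab
    simp only [Set.mem_ofPred_eq, Prod.fst_add, Prod.snd_add, Prod.smul_fst, Prod.smul_snd,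
      smul_eq_mul, C]
    have hz : 0 < a * x + b * y := convex_Ioi (0 : ℝ) hx hy ha hb hab
    -- `(a x + b y)⁻¹ (a u + b v)` is the convex combination of `x⁻¹ u` and `y⁻¹ v`
    -- with weights proportional to `a x` and `b y`
    have hα : 0 ≤ a * x / (a * x + b * y) := by positivity
    have hβ : 0 ≤ b * y / (a * x + b * y) := by positivity
    have hαβ : a * x / (a * x + b * y) + b * y / (a * x + b * y) = 1 := by field_simp
    rw [inv_smul_add_smul_eq hx.ne' hy.ne']
    refine ⟨⟨hz, hf.1 hu hv hα hβ hαβ⟩, ?_⟩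
    calc (a * x + b * y) * f ((a * x / (a * x + b * y)) • (x⁻¹ • u)
          + (b * y / (a * x + b * y)) • (y⁻¹ • v))
        ≤ (a * x + b * y) * (a * x / (a * x + b * y) * f (x⁻¹ • u)
          + b * y / (a * x + b * y) * f (y⁻¹ • v)) :=
          mul_le_mul_of_nonneg_left (hf.2 hu hv hα hβ hαβ) hz.le
      _ = a * (x * f (x⁻¹ • u)) + b * (y * f (y⁻¹ • v)) := by field_simp
  exact ⟨fun p hp r hr a b ha hb hab => (combo hp hr ha hb hab).1,
    fun p hp r hr a b ha hb hab => (combo hp hr ha hb hab).2⟩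

theorem ConvexOn.perspective_comp_linearMap {E F : Type*} [AddCommGroup E] [Module ℝ E]
    [AddCommGroup F] [Module ℝ F] {s : Set F} {t : Set E} {f : F → ℝ} (hf : ConvexOn ℝ s f)
    (φ : E →ₗ[ℝ] ℝ) (ψ : E →ₗ[ℝ] F) (ht : Convex ℝ t) (hφ : ∀ x ∈ t, 0 < φ x)
    (hψ : ∀ x ∈ t, (φ x)⁻¹ • ψ x ∈ s) :
    ConvexOn ℝ t fun x => φ x * f ((φ x)⁻¹ • ψ x) :=
  (hf.perspective.comp_linearMap (φ.prod ψ)).subset (fun x hx => ⟨hφ x hx, hψ x hx⟩) ht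

theorem convex_openStdSimplex (S : Type*) [Fintype S] :
    Convex ℝ {p : S → ℝ | (∀ σ, 0 < p σ) ∧ ∑ σ, p σ = 1} := by
  rintro p ⟨hp, hp1⟩ r ⟨hr, hr1⟩ a b ha hb hab
  refine ⟨fun σ => convex_Ioi (0 : ℝ) (hp σ) (hr σ) ha hb hab, ?_⟩
  simp only [Pi.add_apply, Pi.smul_apply, smul_eq_mul, sum_add_distrib, ← mul_sum, hp1, hr1,
    mul_one, hab]

theorem Gamma_jointly_convex_general (K : ℕ)
    (S O : Type) [Fintype S] [Fintype O]
    (Dev : Fin K → Type) [∀ k, Fintype (Dev k)]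
    (η : ℝ) (hη : 0 < η)
    (q : ∀ k, Dev k → ℝ) (hq : ∀ k, q k ∈ stdSimplex ℝ (Dev k))
    (πst : ∀ k, Dev k)
    (M : S → O → ℝ) (hM : ∀ σ, M σ ∈ stdSimplex ℝ O)
    (c : Fin K → S → ℝ) :
    ConvexOn ℝ
      {pg : (S → ℝ) × (∀ k, Dev k → S → O → ℝ) |
        (∀ σ, 0 < pg.1 σ) ∧ ∑ σ, pg.1 σ = 1}
      (fun pg =>
        (∑ σ, pg.1 σ * ∑ k, c k σ)
          + (1 / η) * ∑ k, ∑ σ, pg.1 σ * ∑ o, M σ o * ∑ d, q k d *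
              (Real.exp ((η / pg.1 σ) * (pg.2 k d σ o - pg.2 k (πst k) σ o)) - 1)) := by
  set D := {pg : (S → ℝ) × (∀ k, Dev k → S → O → ℝ) | (∀ σ, 0 < pg.1 σ) ∧ ∑ σ, pg.1 σ = 1}
  have hD : Convex ℝ D := (convex_openStdSimplex S).linear_preimage (LinearMap.fst ℝ _ _)
  have hf : ConvexOn ℝ Set.univ fun u : ℝ => Real.exp (η * u) - 1 :=
    (convexOn_exp.comp_linearMap (LinearMap.mul ℝ ℝ η)).sub (concaveOn_const 1 convex_univ)
  have hterm : ∀ k σ o d, ConvexOn ℝ D fun pg =>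
      pg.1 σ * (Real.exp (η * ((pg.1 σ)⁻¹ • (pg.2 k d σ o - pg.2 k (πst k) σ o))) - 1) :=
    fun k σ o d => by
      exact hf.perspective_comp_linearMap (LinearMap.proj σ ∘ₗ LinearMap.fst ℝ _ _)
        (LinearMap.proj (φ := fun _ : O => ℝ) o ∘ₗ LinearMap.proj (φ := fun _ : S => O → ℝ) σ ∘ₗ
          (LinearMap.proj (R := ℝ) (φ := fun _ : Dev k => S → O → ℝ) d
            - LinearMap.proj (πst k)) ∘ₗ
          LinearMap.proj (R := ℝ) (φ := fun k => Dev k → S → O → ℝ) k ∘ₗ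
          LinearMap.snd ℝ (S → ℝ) _)
        hD (fun _ hpg => hpg.1 σ) (fun _ _ => trivial)
  have hexp : ConvexOn ℝ D fun pg => ∑ k, ∑ σ, ∑ o, ∑ d, (M σ o * q k d) •
      (pg.1 σ * (Real.exp (η * ((pg.1 σ)⁻¹ • (pg.2 k d σ o - pg.2 k (πst k) σ o))) - 1)) :=
    ConvexOn.sum hD fun k _ => ConvexOn.sum hD fun σ _ => ConvexOn.sum hD fun o _ =>
      ConvexOn.sum hD fun d _ => (hterm k σ o d).smul (mul_nonneg ((hM σ).1 o) ((hq k).1 d))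
  have hlin :=
    (Fintype.linearCombination ℝ (fun σ => ∑ k, c k σ) ∘ₗ LinearMap.fst ℝ _ _).convexOn hD
  refine (hlin.add (hexp.smul (one_div_pos.2 hη).le)).congr fun pg _ => ?_
  simp only [Pi.add_apply, LinearMap.comp_apply, LinearMap.fst_apply,
    Fintype.linearCombination_apply, smul_eq_mul, mul_sum]
  congr 1
  refine sum_congr rfl fun k _ => sum_congr rfl fun σ _ => sum_congr rfl fun o _ =>
    sum_congr rfl fun d _ => ?_
  rw [← mul_assoc η, ← div_eq_mul_inv]
  ring

/-- (joint convexity of the multi-agent exploration-by-optimization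
objective `Γ_{q,η}(π, g; π*, M)` in the played distribution `π` and the reward
estimators `g = (g_1, …, g_K)`, for a fixed deviation profile `π*`, reference
distributions `q_k`, kernel `M`, and deviation-gain terms `c_k`):
the map `(π, g) ↦ Γ(π, g)` is convex on the product of the open simplex over `Σ`
with the vector space of all estimator tuples `g`. -/
theorem Gamma_jointly_convex (K : ℕ) (hK : 0 < K)
    (S O : Type) [Fintype S] [Nonempty S] [Fintype O] [Nonempty O]
    (Dev : Fin K → Type) [∀ k, Fintype (Dev k)] [∀ k, Nonempty (Dev k)]
    (η : ℝ) (hη : 0 < η)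
    (q : ∀ k, Dev k → ℝ) (hq : ∀ k, q k ∈ stdSimplex ℝ (Dev k))
    (πst : ∀ k, Dev k)
    (M : S → O → ℝ) (hM : ∀ σ, M σ ∈ stdSimplex ℝ O)
    (c : Fin K → S → ℝ) :
    ConvexOn ℝ
      {pg : (S → ℝ) × (∀ k, Dev k → S → O → ℝ) |
        (∀ σ, 0 < pg.1 σ) ∧ ∑ σ, pg.1 σ = 1}
      (fun pg =>
        (∑ σ, pg.1 σ * ∑ k, c k σ)
          + (1 / η) * ∑ k, ∑ σ, pg.1 σ * ∑ o, M σ o * ∑ d, q k d *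
              (Real.exp ((η / pg.1 σ) * (pg.2 k d σ o - pg.2 k (πst k) σ o)) - 1)) :=
  Gamma_jointly_convex_general K S O Dev η hη q hq πst M hM c
end

section
/- Let J = (M, Π, O, {Π'_k}_k, {Sw_k}_k) be a K-player instance satisfying Assumption 1, such that the convex-hull instance co(J) satisfies the nonnegative-deviation assumption: for every mixture model M ∈ co(M), every k ∈ [K], and every π ∈ Π, it holds that max_{dev ∈ Π'_k} f^M_k(Sw_k(dev, π)) − f^M_k(π) ≥ 0. Then for all γ > 0, the multi-agent parametrized information ratio satisfies infr_γ(J) ≤ K · decoreg_γ(co(J)). -/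
open Finset
open scoped Classical BigOperators

section MADMSO

variable {K : ℕ} {Sig Obs : Type} [Fintype Sig] [Fintype Obs]
variable {Dev : Fin K → Type} [∀ k, Fintype (Dev k)]

/-- Expected reward of player `k` under kernel `M` at the pure joint decision `σ`:
`f^M_k(σ) = E_{o ∼ M(σ)}[r_k]`. -/
noncomputable def fpure (M : Sig → Obs → ℝ) (reward : Fin K → Obs → ℝ)
    (k : Fin K) (σ : Sig) : ℝ :=
  ∑ o, M σ o * reward k o

/-- Affine extension of `f^M_k` to distributions `π ∈ Δ(Σ)`. -/
noncomputable def fmix (M : Sig → Obs → ℝ) (reward : Fin K → Obs → ℝ)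
    (k : Fin K) (π : Sig → ℝ) : ℝ :=
  ∑ σ, π σ * fpure M reward k σ

/-- Point mass at `σ`, viewed as an element of `Δ(Σ)`. -/
noncomputable def deltaPt (σ : Sig) : Sig → ℝ := fun σ' => if σ' = σ then 1 else 0

/-- Suboptimality `h^M(π) = Σ_k max_{dev ∈ Π'_k} f^M_k(Sw_k(dev, π)) − f^M_k(π)`. -/
noncomputable def hgap (Sw : ∀ k, Dev k → (Sig → ℝ) → (Sig → ℝ))
    (reward : Fin K → Obs → ℝ) (M : Sig → Obs → ℝ) (π : Sig → ℝ) : ℝ :=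
  ∑ k, ((⨆ d : Dev k, fmix M reward k (Sw k d π)) - fmix M reward k π)

/-- The class of all finite mixtures of models in `Models` (the model class of `co(J)`). -/
def coModels (Models : Set (Sig → Obs → ℝ)) : Set (Sig → Obs → ℝ) :=
  {Mb | ∃ (m : ℕ) (w : Fin m → ℝ) (Ms : Fin m → Sig → Obs → ℝ),
    (∀ i, 0 ≤ w i) ∧ (∑ i, w i = 1) ∧ (∀ i, Ms i ∈ Models) ∧
    Mb = fun σ o => ∑ i, w i * Ms i σ o}

/-- Squared Hellinger distance between finitely supported distributions
(`H² ∈ [0, 2]` normalization). -/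
noncomputable def hellSq {X : Type} [Fintype X] (p q : X → ℝ) : ℝ :=
  ∑ x, (Real.sqrt (p x) - Real.sqrt (q x)) ^ 2

/-- Observation distribution `M(π)` of kernel `M` at a mixed decision `π ∈ Δ(Σ)`. -/
noncomputable def obsAt (M : Sig → Obs → ℝ) (π : Sig → ℝ) : Obs → ℝ :=
  fun o => ∑ σ, π σ * M σ o

/-- Finitely supported probability distributions on `X`. -/
def FinDist (X : Type*) : Type _ :=
  {p : X →₀ ℝ // (∀ x, 0 ≤ p x) ∧ (p.sum fun _ v => v) = 1}

/-- The offset multi-agent decision-estimation coefficient of the convex hull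
instance `co(J)`:
`decoreg_γ(co(J)) = sup_{M̄ ∈ co(M)} inf_{p ∈ Δ(Π)} sup_{M ∈ co(M)}
   E_{π ∼ p}[ h^M(π) − γ·H²(M(π), M̄(π)) ]`. -/
noncomputable def decoregCo (γ : ℝ) (Models : Set (Sig → Obs → ℝ))
    (reward : Fin K → Obs → ℝ) (Sw : ∀ k, Dev k → (Sig → ℝ) → (Sig → ℝ)) : ℝ :=
  ⨆ Mb : coModels Models,
    ⨅ p : FinDist {π : Sig → ℝ // π ∈ stdSimplex ℝ Sig},
      ⨆ M : coModels Models,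
        p.1.sum fun π v =>
          v * (hgap Sw reward M.1 π.1 - γ * hellSq (obsAt M.1 π.1) (obsAt Mb.1 π.1))

/-- Prior distribution `μ_prior^k ∈ Δ(Π'_k)`: the marginal law of `π*_k` under `μ`. -/
noncomputable def priorDist (Models : Set (Sig → Obs → ℝ))
    (μ : FinDist (↥Models × ∀ k, Dev k)) (k : Fin K) : Dev k → ℝ :=
  fun d => μ.1.sum fun Mp v => if Mp.2 k = d then v else 0

/-- Probability of observing `o` given the pure decision `σ`, under
`(M, π*) ∼ μ`, `o ∼ M(σ)`. -/
noncomputable def obsProb (Models : Set (Sig → Obs → ℝ))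
    (μ : FinDist (↥Models × ∀ k, Dev k)) (σ : Sig) (o : Obs) : ℝ :=
  μ.1.sum fun Mp v => v * Mp.1.1 σ o

/-- Posterior distribution `μ_post^k(·; σ, o) ∈ Δ(Π'_k)`: the conditional law of
`π*_k` given the decision-observation pair `(σ, o)`. -/
noncomputable def postDist (Models : Set (Sig → Obs → ℝ))
    (μ : FinDist (↥Models × ∀ k, Dev k)) (k : Fin K) (σ : Sig) (o : Obs) :
    Dev k → ℝ :=
  fun d =>
    (μ.1.sum fun Mp v => if Mp.2 k = d then v * Mp.1.1 σ o else 0) /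
      obsProb Models μ σ o

/-- The multi-agent parametrized information ratio `infr_γ(J)`. -/
noncomputable def infrVal (γ : ℝ) (Models : Set (Sig → Obs → ℝ))
    (reward : Fin K → Obs → ℝ) (Sw : ∀ k, Dev k → (Sig → ℝ) → (Sig → ℝ)) : ℝ :=
  ⨆ μ : FinDist (↥Models × ∀ k, Dev k),
    ⨅ π : {π : Sig → ℝ // π ∈ stdSimplex ℝ Sig},
      (μ.1.sum fun Mp v => v * ∑ σ, π.1 σ *
          ∑ k, (fmix Mp.1.1 reward k (Sw k (Mp.2 k) (deltaPt σ)) -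
                  fpure Mp.1.1 reward k σ))
        - γ * ∑ σ, π.1 σ * ∑ o, obsProb Models μ σ o *
            ∑ k, hellSq (postDist Models μ k σ o) (priorDist Models μ k)

end MADMSO

/-!
Fix a prior `μ`, with marginals `ν_k` of `π*_k`. The mean model `M̄` and the conditional models
`M_{k,d}` (the law of `M` given `π*_k = d`) all lie in `co(M)`. Given any `p ∈ Δ(Π)`, play its
mean `π̄`; the information-ratio objective is linear in `π`, so its value at `π̄` is the
`p`-average of its values. By Assumption 1 the expected gain of the deviations `π*_k` regroups
as `∑_k E_{d∼ν_k}` of the gain of `d` under `M_{k,d}`, which nonnegative deviation bounds by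
`h^{M_{k,d}}`. Joint convexity of `H²` and Bayes' rule bound `∑_k E_{d∼ν_k} H²(M_{k,d}(π), M̄(π))`
by the expected prior-to-posterior Hellinger information. Hence the objective at `π̄` is at most
`∑_k E_{d∼ν_k}` of the DEC objective of `(p, M_{k,d}, M̄)`, i.e. at most `K` times its supremum
over `co(M)`.
-/

instance FinDist.instNonempty {X : Type*} [Nonempty X] : Nonempty (FinDist X) :=
  ⟨⟨Finsupp.single (Classical.arbitrary X) 1,
    fun x => by rw [Finsupp.single_apply]; split_ifs <;> norm_num, by simp⟩⟩

lemma FinDist.sum_support {X : Type*} (p : FinDist X) : ∑ x ∈ p.1.support, p.1 x = 1 :=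
  p.2.2

lemma FinDist.sum_mul_le {X : Type*} (p : FinDist X) {f : X → ℝ} {c : ℝ}
    (h : ∀ x, f x ≤ c) : (p.1.sum fun x v => v * f x) ≤ c :=
  calc (p.1.sum fun x v => v * f x) ≤ p.1.sum fun _ v => v * c :=
        Finset.sum_le_sum fun x _ => mul_le_mul_of_nonneg_left (h x) (p.2.1 x)
    _ = c := by rw [Finsupp.sum, ← Finset.sum_mul, p.sum_support, one_mul]

lemma FinDist.sum_mul_sum_mul_comm {X ι : Type*} (p : FinDist X) (s : Finset ι) (π : ι → ℝ)
    (a : X → ι → ℝ) :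
    (p.1.sum fun x v => v * ∑ i ∈ s, π i * a x i) =
      ∑ i ∈ s, π i * p.1.sum fun x v => v * a x i := by
  simp only [Finsupp.sum, Finset.mul_sum]
  rw [Finset.sum_comm]
  exact Finset.sum_congr rfl fun _ _ => Finset.sum_congr rfl fun _ _ => by ring

section SimplexAndHellinger

variable {ι : Type} [Fintype ι]

lemma deltaPt_mem_stdSimplex (i : ι) : deltaPt i ∈ stdSimplex ℝ ι :=
  ⟨fun j => by unfold deltaPt; split_ifs <;> norm_num, by simp [deltaPt]⟩

lemma eq_sum_smul_deltaPt (π : ι → ℝ) : π = ∑ i, π i • deltaPt i := by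
  ext j
  simp [deltaPt, Finset.sum_apply]

lemma fun_eq_sum_mul_of_affine_on_stdSimplex {F : (ι → ℝ) → ℝ}
    (hF : ∀ π₁ π₂ : ι → ℝ, π₁ ∈ stdSimplex ℝ ι → π₂ ∈ stdSimplex ℝ ι →
      ∀ t : ℝ, 0 ≤ t → t ≤ 1 →
        F (fun i => t * π₁ i + (1 - t) * π₂ i) = t * F π₁ + (1 - t) * F π₂)
    {π : ι → ℝ} (hπ : π ∈ stdSimplex ℝ ι) :
    F π = ∑ i, π i * F (deltaPt i) := by
  have hcomb : ∀ x ∈ stdSimplex ℝ ι, ∀ y ∈ stdSimplex ℝ ι, ∀ a b : ℝ, 0 ≤ a → 0 ≤ b →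
      a + b = 1 → F (a • x + b • y) = a • F x + b • F y := by
    intro x hx y hy a b ha hb hab
    obtain rfl : b = 1 - a := by linarith
    exact hF x y hx hy a ha (by linarith)
  have hconvex : ConvexOn ℝ (stdSimplex ℝ ι) F :=
    ⟨convex_stdSimplex ℝ ι, fun x hx y hy a b ha hb hab => (hcomb x hx y hy a b ha hb hab).le⟩
  have hconcave : ConcaveOn ℝ (stdSimplex ℝ ι) F :=
    ⟨convex_stdSimplex ℝ ι, fun x hx y hy a b ha hb hab => (hcomb x hx y hy a b ha hb hab).ge⟩
  have hw : ∀ i ∈ univ, 0 ≤ π i := fun i _ => hπ.1 i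
  have hvert : ∀ i ∈ univ, deltaPt i ∈ stdSimplex ℝ ι := fun i _ => deltaPt_mem_stdSimplex i
  conv_lhs => rw [eq_sum_smul_deltaPt π]
  exact le_antisymm (hconvex.map_sum_le hw hπ.2 hvert) (hconcave.le_map_sum hw hπ.2 hvert)

lemma bddBelow_range_sum_mul_stdSimplex (g : ι → ℝ) :
    BddBelow (Set.range fun π : {π : ι → ℝ // π ∈ stdSimplex ℝ ι} => ∑ i, π.1 i * g i) := by
  refine ⟨⨅ i, g i, ?_⟩
  rintro _ ⟨π, rfl⟩
  calc ⨅ i, g i = ∑ i, π.1 i * ⨅ j, g j := by rw [← Finset.sum_mul, π.2.2, one_mul]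
    _ ≤ ∑ i, π.1 i * g i := Finset.sum_le_sum fun i _ =>
        mul_le_mul_of_nonneg_left (ciInf_le (Set.finite_range g).bddBelow i) (π.2.1 i)

lemma sum_sum_smul_mul {κ : Type} (s : Finset κ) (c : κ → ℝ) (v : κ → ι → ℝ) (g : ι → ℝ) :
    ∑ i, (∑ j ∈ s, c j • v j) i * g i = ∑ j ∈ s, c j * ∑ i, v j i * g i := by
  simp only [Finset.sum_apply, Pi.smul_apply, smul_eq_mul, Finset.sum_mul, Finset.mul_sum]
  rw [Finset.sum_comm]
  exact Finset.sum_congr rfl fun _ _ => Finset.sum_congr rfl fun _ _ => by ring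

lemma sum_mul_mem_Icc_of_mem_stdSimplex {w a : ι → ℝ} (hw : w ∈ stdSimplex ℝ ι)
    (ha : ∀ i, a i ∈ Set.Icc (0 : ℝ) 1) : ∑ i, w i * a i ∈ Set.Icc (0 : ℝ) 1 := by
  refine ⟨Finset.sum_nonneg fun i _ => mul_nonneg (hw.1 i) (ha i).1, ?_⟩
  calc ∑ i, w i * a i ≤ ∑ i, w i :=
        Finset.sum_le_sum fun i _ => mul_le_of_le_one_right (hw.1 i) (ha i).2
    _ = 1 := hw.2

lemma hellSq_nonneg (p q : ι → ℝ) : 0 ≤ hellSq p q :=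
  Finset.sum_nonneg fun _ _ => sq_nonneg _

lemma hellSq_self (p : ι → ℝ) : hellSq p p = 0 := by
  simp [hellSq]

lemma hellSq_const_mul {c : ℝ} (hc : 0 ≤ c) (p q : ι → ℝ) :
    hellSq (fun i => c * p i) (fun i => c * q i) = c * hellSq p q := by
  simp only [hellSq, Finset.mul_sum, Real.sqrt_mul hc, ← mul_sub, mul_pow, Real.sq_sqrt hc]

lemma sq_sqrt_sum_sub_sqrt_sum_le {κ : Type} (s : Finset κ) {w a b : κ → ℝ}
    (hw : ∀ j, 0 ≤ w j) (ha : ∀ j, 0 ≤ a j) (hb : ∀ j, 0 ≤ b j) :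
    (√(∑ j ∈ s, w j * a j) - √(∑ j ∈ s, w j * b j)) ^ 2 ≤
      ∑ j ∈ s, w j * (√(a j) - √(b j)) ^ 2 := by
  have hwa : ∀ j, 0 ≤ w j * a j := fun j => mul_nonneg (hw j) (ha j)
  have hwb : ∀ j, 0 ≤ w j * b j := fun j => mul_nonneg (hw j) (hb j)
  have expand : ∀ {u v : ℝ}, 0 ≤ u → 0 ≤ v → (√u - √v) ^ 2 = u + v - 2 * (√u * √v) := by
    intro u v hu hv
    rw [sub_sq, Real.sq_sqrt hu, Real.sq_sqrt hv]; ring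
  have hcs : ∑ j ∈ s, w j * (√(a j) * √(b j)) ≤
      √(∑ j ∈ s, w j * a j) * √(∑ j ∈ s, w j * b j) := by
    calc ∑ j ∈ s, w j * (√(a j) * √(b j)) = ∑ j ∈ s, √(w j * a j) * √(w j * b j) := by
          refine Finset.sum_congr rfl fun j _ => ?_
          rw [Real.sqrt_mul (hw j), Real.sqrt_mul (hw j), mul_mul_mul_comm,
            Real.mul_self_sqrt (hw j)]
      _ ≤ _ := Real.sum_sqrt_mul_sqrt_le s hwa hwb
  rw [expand (Finset.sum_nonneg fun j _ => hwa j) (Finset.sum_nonneg fun j _ => hwb j)]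
  have htwo : ∑ j ∈ s, w j * (2 * (√(a j) * √(b j))) =
      2 * ∑ j ∈ s, w j * (√(a j) * √(b j)) := by
    rw [Finset.mul_sum]; exact Finset.sum_congr rfl fun _ _ => by ring
  simp only [expand (ha _) (hb _), mul_sub, mul_add, Finset.sum_sub_distrib,
    Finset.sum_add_distrib, htwo]
  linarith

end SimplexAndHellinger

instance stdSimplex.instNonempty {ι : Type} [Fintype ι] [Nonempty ι] :
    Nonempty {π : ι → ℝ // π ∈ stdSimplex ℝ ι} :=
  ⟨⟨deltaPt (Classical.arbitrary ι), deltaPt_mem_stdSimplex _⟩⟩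

lemma sum_mul_mem_coModels {Sig Obs : Type} {Models : Set (Sig → Obs → ℝ)} {Y : Type}
    (s : Finset Y) {c : Y → ℝ} {G : Y → Sig → Obs → ℝ} (hc : ∀ y ∈ s, 0 ≤ c y)
    (hsum : ∑ y ∈ s, c y = 1) (hG : ∀ y ∈ s, G y ∈ Models) :
    (fun σ o => ∑ y ∈ s, c y * G y σ o) ∈ coModels Models := by
  refine ⟨s.card, fun i => c (s.equivFin.symm i), fun i => G (s.equivFin.symm i),
    fun i => hc _ (s.equivFin.symm i).2, ?_, fun i => hG _ (s.equivFin.symm i).2, ?_⟩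
  · rw [Equiv.sum_comp s.equivFin.symm (fun y : s => c y), Finset.sum_coe_sort s c, hsum]
  · funext σ o
    rw [Equiv.sum_comp s.equivFin.symm (fun y : s => c y * G y σ o),
      Finset.sum_coe_sort s (fun y => c y * G y σ o)]

section Models

variable {K : ℕ} {Sig Obs : Type} [Fintype Obs]

lemma stdSimplex_of_mem_coModels {Models : Set (Sig → Obs → ℝ)}
    (hModels : ∀ M ∈ Models, ∀ σ, M σ ∈ stdSimplex ℝ Obs) {M : Sig → Obs → ℝ}
    (hM : M ∈ coModels Models) (σ : Sig) : M σ ∈ stdSimplex ℝ Obs := by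
  obtain ⟨m, w, Ms, hw, hsum, hMs, rfl⟩ := hM
  have hcomb : (fun o => ∑ i, w i * Ms i σ o) = ∑ i, w i • Ms i σ := by
    ext o
    simp [Finset.sum_apply]
  show (fun o => ∑ i, w i * Ms i σ o) ∈ stdSimplex ℝ Obs
  rw [hcomb]
  exact (convex_stdSimplex ℝ Obs).sum_mem (fun i _ => hw i) hsum
    fun i _ => hModels _ (hMs i) σ

variable [Fintype Sig]

lemma hellSq_obsAt_le {M M' : Sig → Obs → ℝ} (hM : ∀ σ o, 0 ≤ M σ o)
    (hM' : ∀ σ o, 0 ≤ M' σ o) {π : Sig → ℝ} (hπ : ∀ σ, 0 ≤ π σ) :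
    hellSq (obsAt M π) (obsAt M' π) ≤ ∑ σ, π σ * hellSq (M σ) (M' σ) := by
  calc hellSq (obsAt M π) (obsAt M' π)
      ≤ ∑ o, ∑ σ, π σ * (√(M σ o) - √(M' σ o)) ^ 2 :=
        Finset.sum_le_sum fun o _ =>
          sq_sqrt_sum_sub_sqrt_sum_le univ hπ (fun σ => hM σ o) (fun σ => hM' σ o)
    _ = ∑ σ, π σ * hellSq (M σ) (M' σ) := by
        rw [Finset.sum_comm]
        simp only [hellSq, Finset.mul_sum]

lemma fmix_sum_mul {Y : Type} (s : Finset Y) (c : Y → ℝ) (G : Y → Sig → Obs → ℝ)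
    (reward : Fin K → Obs → ℝ) (k : Fin K) (π : Sig → ℝ) :
    fmix (fun σ o => ∑ y ∈ s, c y * G y σ o) reward k π =
      ∑ y ∈ s, c y * fmix (G y) reward k π := by
  simp only [fmix, fpure, Finset.sum_mul, Finset.mul_sum]
  refine (Finset.sum_congr rfl fun σ _ => Finset.sum_comm).trans ?_
  rw [Finset.sum_comm]
  exact Finset.sum_congr rfl fun _ _ => Finset.sum_congr rfl fun _ _ =>
    Finset.sum_congr rfl fun _ _ => by ring

lemma fmix_const_mul (c : ℝ) (M : Sig → Obs → ℝ) (reward : Fin K → Obs → ℝ) (k : Fin K)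
    (π : Sig → ℝ) : fmix (fun σ o => c * M σ o) reward k π = c * fmix M reward k π := by
  simp only [fmix, fpure, Finset.mul_sum]
  exact Finset.sum_congr rfl fun _ _ => Finset.sum_congr rfl fun _ _ => by ring

lemma fmix_mem_Icc {M : Sig → Obs → ℝ} (hM : ∀ σ, M σ ∈ stdSimplex ℝ Obs)
    {reward : Fin K → Obs → ℝ} (hreward : ∀ k o, reward k o ∈ Set.Icc (0 : ℝ) 1) (k : Fin K)
    {π : Sig → ℝ} (hπ : π ∈ stdSimplex ℝ Sig) : fmix M reward k π ∈ Set.Icc (0 : ℝ) 1 :=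
  sum_mul_mem_Icc_of_mem_stdSimplex hπ fun σ =>
    sum_mul_mem_Icc_of_mem_stdSimplex (hM σ) (hreward k)

variable {Dev : Fin K → Type}

noncomputable def devGain (reward : Fin K → Obs → ℝ) (Sw : ∀ k, Dev k → (Sig → ℝ) → (Sig → ℝ))
    (M : Sig → Obs → ℝ) (k : Fin K) (d : Dev k) (π : Sig → ℝ) : ℝ :=
  fmix M reward k (Sw k d π) - fmix M reward k π

variable {reward : Fin K → Obs → ℝ} {Sw : ∀ k, Dev k → (Sig → ℝ) → (Sig → ℝ)}

lemma hgap_le_card {M : Sig → Obs → ℝ} (hM : ∀ σ, M σ ∈ stdSimplex ℝ Obs)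
    (hreward : ∀ k o, reward k o ∈ Set.Icc (0 : ℝ) 1)
    (hSw : ∀ k d π, π ∈ stdSimplex ℝ Sig → Sw k d π ∈ stdSimplex ℝ Sig)
    {π : Sig → ℝ} (hπ : π ∈ stdSimplex ℝ Sig) : hgap Sw reward M π ≤ K := by
  calc hgap Sw reward M π ≤ ∑ _k : Fin K, (1 : ℝ) := Finset.sum_le_sum fun k _ => by
        have hsup : (⨆ d : Dev k, fmix M reward k (Sw k d π)) ≤ 1 :=
          Real.iSup_le (fun d => (fmix_mem_Icc hM hreward k (hSw k d π hπ)).2) zero_le_one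
        linarith [(fmix_mem_Icc hM hreward k hπ).1]
    _ = K := by simp

lemma devGain_eq_sum_mul_deltaPt {M : Sig → Obs → ℝ} {k : Fin K} {d : Dev k}
    (hM : ∀ π₁ π₂ : Sig → ℝ, π₁ ∈ stdSimplex ℝ Sig → π₂ ∈ stdSimplex ℝ Sig →
      ∀ t : ℝ, 0 ≤ t → t ≤ 1 →
        fmix M reward k (Sw k d fun σ => t * π₁ σ + (1 - t) * π₂ σ) =
          t * fmix M reward k (Sw k d π₁) + (1 - t) * fmix M reward k (Sw k d π₂))
    {π : Sig → ℝ} (hπ : π ∈ stdSimplex ℝ Sig) :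
    devGain reward Sw M k d π =
      ∑ σ, π σ * (fmix M reward k (Sw k d (deltaPt σ)) - fpure M reward k σ) := by
  rw [devGain, fun_eq_sum_mul_of_affine_on_stdSimplex
    (F := fun π => fmix M reward k (Sw k d π)) hM hπ]
  simp only [fmix, mul_sub, Finset.sum_sub_distrib]

variable [∀ k, Fintype (Dev k)]

lemma devGain_le_hgap {M : Sig → Obs → ℝ} {π : Sig → ℝ}
    (hM : ∀ k, 0 ≤ (⨆ d : Dev k, fmix M reward k (Sw k d π)) - fmix M reward k π)
    (k : Fin K) (d : Dev k) : devGain reward Sw M k d π ≤ hgap Sw reward M π := by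
  have hsup : fmix M reward k (Sw k d π) ≤ ⨆ d' : Dev k, fmix M reward k (Sw k d' π) :=
    le_ciSup (f := fun d' => fmix M reward k (Sw k d' π)) (Set.finite_range _).bddAbove d
  have hterm := Finset.single_le_sum (f := fun k =>
    (⨆ d : Dev k, fmix M reward k (Sw k d π)) - fmix M reward k π)
    (fun k _ => hM k) (mem_univ k)
  unfold devGain hgap
  linarith

end Models

section DEC

variable {K : ℕ} {Sig Obs : Type} [Fintype Sig] [Fintype Obs] {Dev : Fin K → Type}
  {reward : Fin K → Obs → ℝ} {Sw : ∀ k, Dev k → (Sig → ℝ) → (Sig → ℝ)} {γ : ℝ}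

def HasNonnegDeviation (Models : Set (Sig → Obs → ℝ)) (reward : Fin K → Obs → ℝ)
    (Sw : ∀ k, Dev k → (Sig → ℝ) → (Sig → ℝ)) : Prop :=
  ∀ M ∈ Models, ∀ k : Fin K, ∀ π ∈ stdSimplex ℝ Sig,
    0 ≤ (⨆ d : Dev k, fmix M reward k (Sw k d π)) - fmix M reward k π

lemma HasNonnegDeviation.hgap_nonneg {Models : Set (Sig → Obs → ℝ)}
    (h : HasNonnegDeviation Models reward Sw) {M : Sig → Obs → ℝ} (hM : M ∈ Models)
    {π : Sig → ℝ} (hπ : π ∈ stdSimplex ℝ Sig) : 0 ≤ hgap Sw reward M π :=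
  Finset.sum_nonneg fun k _ => h M hM k π hπ

/-- `decoregCo γ Models reward Sw` is by definition
`⨆ Mb : coModels Models, ⨅ p, ⨆ M : coModels Models, decObjective γ reward Sw p M Mb`. -/
noncomputable def decObjective (γ : ℝ) (reward : Fin K → Obs → ℝ)
    (Sw : ∀ k, Dev k → (Sig → ℝ) → (Sig → ℝ))
    (p : FinDist {π : Sig → ℝ // π ∈ stdSimplex ℝ Sig}) (M Mb : Sig → Obs → ℝ) : ℝ :=
  p.1.sum fun π v => v * (hgap Sw reward M π.1 - γ * hellSq (obsAt M π.1) (obsAt Mb π.1))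

lemma decObjective_le_card (hγ : 0 ≤ γ) (hreward : ∀ k o, reward k o ∈ Set.Icc (0 : ℝ) 1)
    (hSw : ∀ k d π, π ∈ stdSimplex ℝ Sig → Sw k d π ∈ stdSimplex ℝ Sig)
    {M : Sig → Obs → ℝ} (hM : ∀ σ, M σ ∈ stdSimplex ℝ Obs)
    (p : FinDist {π : Sig → ℝ // π ∈ stdSimplex ℝ Sig}) (Mb : Sig → Obs → ℝ) :
    decObjective γ reward Sw p M Mb ≤ K :=
  p.sum_mul_le fun π => by
    nlinarith [hgap_le_card hM hreward hSw π.2, hellSq_nonneg (obsAt M π.1) (obsAt Mb π.1)]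

variable {Models : Set (Sig → Obs → ℝ)}

lemma bddAbove_range_decObjective (hγ : 0 ≤ γ)
    (hreward : ∀ k o, reward k o ∈ Set.Icc (0 : ℝ) 1)
    (hModels : ∀ M ∈ Models, ∀ σ, M σ ∈ stdSimplex ℝ Obs)
    (hSw : ∀ k d π, π ∈ stdSimplex ℝ Sig → Sw k d π ∈ stdSimplex ℝ Sig)
    (p : FinDist {π : Sig → ℝ // π ∈ stdSimplex ℝ Sig}) (Mb : Sig → Obs → ℝ) :
    BddAbove (Set.range fun M : coModels Models => decObjective γ reward Sw p M.1 Mb) :=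
  ⟨K, Set.forall_mem_range.2 fun M =>
    decObjective_le_card hγ hreward hSw (stdSimplex_of_mem_coModels hModels M.2) p Mb⟩

lemma iSup_decObjective_nonneg (hγ : 0 ≤ γ)
    (hreward : ∀ k o, reward k o ∈ Set.Icc (0 : ℝ) 1)
    (hModels : ∀ M ∈ Models, ∀ σ, M σ ∈ stdSimplex ℝ Obs)
    (hSw : ∀ k d π, π ∈ stdSimplex ℝ Sig → Sw k d π ∈ stdSimplex ℝ Sig)
    (hNonneg : HasNonnegDeviation (coModels Models) reward Sw)
    (p : FinDist {π : Sig → ℝ // π ∈ stdSimplex ℝ Sig}) {Mb : Sig → Obs → ℝ}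
    (hMb : Mb ∈ coModels Models) :
    0 ≤ ⨆ M : coModels Models, decObjective γ reward Sw p M.1 Mb := by
  have hself : 0 ≤ decObjective γ reward Sw p Mb Mb :=
    Finset.sum_nonneg fun π _ => mul_nonneg (p.2.1 π) <| by
      rw [hellSq_self, mul_zero, sub_zero]
      exact hNonneg.hgap_nonneg hMb π.2
  exact hself.trans
    (le_ciSup (bddAbove_range_decObjective hγ hreward hModels hSw p Mb) ⟨Mb, hMb⟩)

lemma decoregCo_nonneg (hγ : 0 ≤ γ) (hreward : ∀ k o, reward k o ∈ Set.Icc (0 : ℝ) 1)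
    (hModels : ∀ M ∈ Models, ∀ σ, M σ ∈ stdSimplex ℝ Obs)
    (hSw : ∀ k d π, π ∈ stdSimplex ℝ Sig → Sw k d π ∈ stdSimplex ℝ Sig)
    (hNonneg : HasNonnegDeviation (coModels Models) reward Sw) :
    0 ≤ decoregCo γ Models reward Sw :=
  Real.iSup_nonneg fun Mb => Real.iInf_nonneg fun p =>
    iSup_decObjective_nonneg hγ hreward hModels hSw hNonneg p Mb.2

lemma iInf_iSup_decObjective_le_decoregCo [Nonempty Sig] (hγ : 0 ≤ γ)
    (hreward : ∀ k o, reward k o ∈ Set.Icc (0 : ℝ) 1)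
    (hModels : ∀ M ∈ Models, ∀ σ, M σ ∈ stdSimplex ℝ Obs)
    (hSw : ∀ k d π, π ∈ stdSimplex ℝ Sig → Sw k d π ∈ stdSimplex ℝ Sig)
    (hNonneg : HasNonnegDeviation (coModels Models) reward Sw)
    {Mb : Sig → Obs → ℝ} (hMb : Mb ∈ coModels Models) :
    ⨅ p, ⨆ M : coModels Models, decObjective γ reward Sw p M.1 Mb ≤
      decoregCo γ Models reward Sw := by
  refine le_ciSup (f := fun Mb : coModels Models =>
    ⨅ p, ⨆ M : coModels Models, decObjective γ reward Sw p M.1 Mb.1) ⟨K, ?_⟩ ⟨Mb, hMb⟩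
  rintro _ ⟨Mb', rfl⟩
  have hbdd : BddBelow (Set.range fun p =>
      ⨆ M : coModels Models, decObjective γ reward Sw p M.1 Mb'.1) :=
    ⟨0, Set.forall_mem_range.2 fun p =>
      iSup_decObjective_nonneg hγ hreward hModels hSw hNonneg p Mb'.2⟩
  exact (ciInf_le hbdd (Classical.arbitrary _)).trans <| Real.iSup_le (fun M =>
    decObjective_le_card hγ hreward hSw (stdSimplex_of_mem_coModels hModels M.2) _ _)
    (Nat.cast_nonneg K)

end DEC

section Bayes

variable {K : ℕ} {Sig Obs : Type} {Dev : Fin K → Type} {Models : Set (Sig → Obs → ℝ)}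
  (μ : FinDist (↥Models × ∀ k, Dev k))

lemma priorDist_eq_sum_filter (k : Fin K) (d : Dev k) :
    priorDist Models μ k d = ∑ x ∈ μ.1.support with x.2 k = d, μ.1 x := by
  rw [Finset.sum_filter]
  rfl

lemma priorDist_nonneg (k : Fin K) (d : Dev k) : 0 ≤ priorDist Models μ k d := by
  rw [priorDist_eq_sum_filter]
  exact Finset.sum_nonneg fun x _ => μ.2.1 x

lemma obsProb_mem_coModels : obsProb Models μ ∈ coModels Models :=
  sum_mul_mem_coModels μ.1.support (fun x _ => μ.2.1 x) μ.sum_support fun x _ => x.1.2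

/-- The law of `M` given `π*_k = d` under `μ`. When `π*_k = d` has prior mass zero it only ever
appears with weight zero, and `M̄` is just a convenient member of `co(M)`. -/
noncomputable def condModel (k : Fin K) (d : Dev k) : Sig → Obs → ℝ :=
  if priorDist Models μ k d = 0 then obsProb Models μ
  else fun σ o => ∑ x ∈ μ.1.support with x.2 k = d, μ.1 x / priorDist Models μ k d * x.1.1 σ o

lemma condModel_mem_coModels (k : Fin K) (d : Dev k) : condModel μ k d ∈ coModels Models := by
  unfold condModel
  split_ifs with h
  · exact obsProb_mem_coModels μ
  · refine sum_mul_mem_coModels _ (fun x _ => div_nonneg (μ.2.1 x) (priorDist_nonneg μ k d))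
      ?_ fun x _ => x.1.2
    rw [← Finset.sum_div, ← priorDist_eq_sum_filter, div_self h]

lemma priorDist_mul_condModel (k : Fin K) (d : Dev k) (σ : Sig) (o : Obs) :
    priorDist Models μ k d * condModel μ k d σ o =
      ∑ x ∈ μ.1.support with x.2 k = d, μ.1 x * x.1.1 σ o := by
  unfold condModel
  split_ifs with h
  · rw [h, zero_mul]
    rw [priorDist_eq_sum_filter, Finset.sum_eq_zero_iff_of_nonneg fun x _ => μ.2.1 x] at h
    exact (Finset.sum_eq_zero fun x hx => by rw [h x hx, zero_mul]).symm
  · rw [Finset.mul_sum]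
    exact Finset.sum_congr rfl fun x _ => by field_simp

lemma postDist_apply (k : Fin K) (σ : Sig) (o : Obs) (d : Dev k) :
    postDist Models μ k σ o d =
      priorDist Models μ k d * condModel μ k d σ o / obsProb Models μ σ o := by
  rw [priorDist_mul_condModel, Finset.sum_filter]
  rfl

lemma sum_priorDist [∀ k, Fintype (Dev k)] (k : Fin K) : ∑ d, priorDist Models μ k d = 1 := by
  simp only [priorDist_eq_sum_filter]
  exact (Finset.sum_fiberwise μ.1.support (fun x => x.2 k) μ.1).trans μ.sum_support

lemma priorDist_mul_devGain_condModel [Fintype Sig] [Fintype Obs] {reward : Fin K → Obs → ℝ}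
    {Sw : ∀ k, Dev k → (Sig → ℝ) → (Sig → ℝ)} (k : Fin K) (d : Dev k) (k' : Fin K)
    (d' : Dev k') (π : Sig → ℝ) :
    priorDist Models μ k d * devGain reward Sw (condModel μ k d) k' d' π =
      ∑ x ∈ μ.1.support with x.2 k = d, μ.1 x * devGain reward Sw x.1.1 k' d' π := by
  have hfmix : ∀ π', priorDist Models μ k d * fmix (condModel μ k d) reward k' π' =
      ∑ x ∈ μ.1.support with x.2 k = d, μ.1 x * fmix x.1.1 reward k' π' := by
    intro π'
    rw [← fmix_const_mul, ← fmix_sum_mul]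
    simp only [priorDist_mul_condModel]
  simp only [devGain, mul_sub, hfmix, Finset.sum_sub_distrib]

variable {μ} [Fintype Obs]

lemma obsProb_nonneg (hModels : ∀ M ∈ Models, ∀ σ, M σ ∈ stdSimplex ℝ Obs) (σ : Sig)
    (o : Obs) : 0 ≤ obsProb Models μ σ o :=
  Finset.sum_nonneg fun x _ => mul_nonneg (μ.2.1 x) ((hModels _ x.1.2 σ).1 o)

lemma priorDist_mul_condModel_mem_Icc (hModels : ∀ M ∈ Models, ∀ σ, M σ ∈ stdSimplex ℝ Obs)
    (k : Fin K) (d : Dev k) (σ : Sig) (o : Obs) :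
    priorDist Models μ k d * condModel μ k d σ o ∈ Set.Icc 0 (obsProb Models μ σ o) := by
  have hterm : ∀ x ∈ μ.1.support, 0 ≤ μ.1 x * x.1.1 σ o :=
    fun x _ => mul_nonneg (μ.2.1 x) ((hModels _ x.1.2 σ).1 o)
  rw [priorDist_mul_condModel]
  exact ⟨Finset.sum_nonneg fun x hx => hterm x (Finset.mem_filter.1 hx).1,
    Finset.sum_le_sum_of_subset_of_nonneg (Finset.filter_subset _ _) fun x hx _ => hterm x hx⟩

/-- Both sides equal `∑ d, ∑ o, (√(ν d · M_d(σ, o)) - √(ν d · M̄(σ, o)))²`. -/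
lemma sum_priorDist_mul_hellSq_condModel [∀ k, Fintype (Dev k)]
    (hModels : ∀ M ∈ Models, ∀ σ, M σ ∈ stdSimplex ℝ Obs)
    (k : Fin K) (σ : Sig) :
    ∑ d, priorDist Models μ k d * hellSq (condModel μ k d σ) (obsProb Models μ σ) =
      ∑ o, obsProb Models μ σ o * hellSq (postDist Models μ k σ o) (priorDist Models μ k) := by
  have hpost : ∀ o d, obsProb Models μ σ o * postDist Models μ k σ o d =
      priorDist Models μ k d * condModel μ k d σ o := by
    intro o d
    obtain ⟨hlo, hhi⟩ := priorDist_mul_condModel_mem_Icc hModels k d σ o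
    rw [postDist_apply]
    rcases (obsProb_nonneg hModels σ o).eq_or_lt with h | h
    · rw [← h, zero_mul]; linarith
    · exact mul_div_cancel₀ _ h.ne'
  calc ∑ d, priorDist Models μ k d * hellSq (condModel μ k d σ) (obsProb Models μ σ)
      = ∑ d, hellSq (fun o => priorDist Models μ k d * condModel μ k d σ o)
          (fun o => priorDist Models μ k d * obsProb Models μ σ o) :=
        Finset.sum_congr rfl fun d _ => (hellSq_const_mul (priorDist_nonneg μ k d) _ _).symm
    _ = ∑ o, hellSq (fun d => obsProb Models μ σ o * postDist Models μ k σ o d)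
          (fun d => obsProb Models μ σ o * priorDist Models μ k d) := by
        simp only [hellSq, hpost, mul_comm (obsProb Models μ σ _)]
        exact Finset.sum_comm
    _ = ∑ o, obsProb Models μ σ o * hellSq (postDist Models μ k σ o) (priorDist Models μ k) :=
        Finset.sum_congr rfl fun o _ => hellSq_const_mul (obsProb_nonneg hModels σ o) _ _

end Bayes

section InformationRatio

variable {K : ℕ} {Sig Obs : Type} [Fintype Sig] [Fintype Obs] {Dev : Fin K → Type}
  [∀ k, Fintype (Dev k)] {Models : Set (Sig → Obs → ℝ)} {reward : Fin K → Obs → ℝ}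
  {Sw : ∀ k, Dev k → (Sig → ℝ) → (Sig → ℝ)} {γ : ℝ}

def HasAffineSwitchedValues (Models : Set (Sig → Obs → ℝ)) (reward : Fin K → Obs → ℝ)
    (Sw : ∀ k, Dev k → (Sig → ℝ) → (Sig → ℝ)) : Prop :=
  ∀ M ∈ Models, ∀ (k : Fin K) (d : Dev k), ∀ π₁ π₂ : Sig → ℝ,
    π₁ ∈ stdSimplex ℝ Sig → π₂ ∈ stdSimplex ℝ Sig → ∀ t : ℝ, 0 ≤ t → t ≤ 1 →
      fmix M reward k (Sw k d fun σ => t * π₁ σ + (1 - t) * π₂ σ) =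
        t * fmix M reward k (Sw k d π₁) + (1 - t) * fmix M reward k (Sw k d π₂)

/-- `infrVal γ Models reward Sw` is by definition
`⨆ μ, ⨅ π, infrObjective γ Models reward Sw μ π`. -/
noncomputable def infrObjective (γ : ℝ) (Models : Set (Sig → Obs → ℝ))
    (reward : Fin K → Obs → ℝ) (Sw : ∀ k, Dev k → (Sig → ℝ) → (Sig → ℝ))
    (μ : FinDist (↥Models × ∀ k, Dev k)) (π : Sig → ℝ) : ℝ :=
  (μ.1.sum fun Mp v => v * ∑ σ, π σ *
      ∑ k, (fmix Mp.1.1 reward k (Sw k (Mp.2 k) (deltaPt σ)) - fpure Mp.1.1 reward k σ))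
    - γ * ∑ σ, π σ * ∑ o, obsProb Models μ σ o *
      ∑ k, hellSq (postDist Models μ k σ o) (priorDist Models μ k)

lemma exists_infrObjective_eq_sum_mul (μ : FinDist (↥Models × ∀ k, Dev k)) :
    ∃ g : Sig → ℝ, ∀ π, infrObjective γ Models reward Sw μ π = ∑ σ, π σ * g σ := by
  refine ⟨fun σ => (μ.1.sum fun Mp v => v *
      ∑ k, (fmix Mp.1.1 reward k (Sw k (Mp.2 k) (deltaPt σ)) - fpure Mp.1.1 reward k σ))
    - γ * ∑ o, obsProb Models μ σ o *
      ∑ k, hellSq (postDist Models μ k σ o) (priorDist Models μ k), fun π => ?_⟩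
  rw [infrObjective, FinDist.sum_mul_sum_mul_comm, Finset.mul_sum, ← Finset.sum_sub_distrib]
  exact Finset.sum_congr rfl fun σ _ => by ring

lemma sum_mul_deviation_gain_le (hAffine : HasAffineSwitchedValues Models reward Sw)
    (hNonneg : HasNonnegDeviation (coModels Models) reward Sw)
    (μ : FinDist (↥Models × ∀ k, Dev k)) {q : Sig → ℝ} (hq : q ∈ stdSimplex ℝ Sig) :
    (μ.1.sum fun Mp v => v * ∑ σ, q σ *
        ∑ k, (fmix Mp.1.1 reward k (Sw k (Mp.2 k) (deltaPt σ)) - fpure Mp.1.1 reward k σ)) ≤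
      ∑ k, ∑ d, priorDist Models μ k d * hgap Sw reward (condModel μ k d) q := by
  have hvertex : ∀ x : ↥Models × ∀ k, Dev k, ∑ σ, q σ *
      ∑ k, (fmix x.1.1 reward k (Sw k (x.2 k) (deltaPt σ)) - fpure x.1.1 reward k σ) =
        ∑ k, devGain reward Sw x.1.1 k (x.2 k) q := by
    intro x
    simp only [Finset.mul_sum]
    rw [Finset.sum_comm]
    exact Finset.sum_congr rfl fun k _ =>
      (devGain_eq_sum_mul_deltaPt (hAffine _ x.1.2 k (x.2 k)) hq).symm
  calc (μ.1.sum fun Mp v => v * ∑ σ, q σ *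
        ∑ k, (fmix Mp.1.1 reward k (Sw k (Mp.2 k) (deltaPt σ)) - fpure Mp.1.1 reward k σ))
      = ∑ x ∈ μ.1.support, ∑ k, μ.1 x * devGain reward Sw x.1.1 k (x.2 k) q :=
        Finset.sum_congr rfl fun x _ => by dsimp only; rw [hvertex x, Finset.mul_sum]
    _ = ∑ k, ∑ d, ∑ x ∈ μ.1.support with x.2 k = d, μ.1 x * devGain reward Sw x.1.1 k d q := by
        rw [Finset.sum_comm]
        refine Finset.sum_congr rfl fun k _ => ?_
        rw [← Finset.sum_fiberwise μ.1.support (fun x => x.2 k)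
          (fun x => μ.1 x * devGain reward Sw x.1.1 k (x.2 k) q)]
        refine Finset.sum_congr rfl fun d _ => Finset.sum_congr rfl fun x hx => ?_
        rw [(Finset.mem_filter.1 hx).2]
    _ = ∑ k, ∑ d, priorDist Models μ k d * devGain reward Sw (condModel μ k d) k d q := by
        simp only [priorDist_mul_devGain_condModel]
    _ ≤ ∑ k, ∑ d, priorDist Models μ k d * hgap Sw reward (condModel μ k d) q :=
        Finset.sum_le_sum fun k _ => Finset.sum_le_sum fun d _ =>
          mul_le_mul_of_nonneg_left (devGain_le_hgap
            (fun k' => hNonneg _ (condModel_mem_coModels μ k d) k' q hq) k d)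
            (priorDist_nonneg μ k d)

lemma sum_priorDist_mul_hellSq_obsAt_le (hModels : ∀ M ∈ Models, ∀ σ, M σ ∈ stdSimplex ℝ Obs)
    (μ : FinDist (↥Models × ∀ k, Dev k)) {q : Sig → ℝ} (hq : q ∈ stdSimplex ℝ Sig) :
    ∑ k, ∑ d, priorDist Models μ k d *
        hellSq (obsAt (condModel μ k d) q) (obsAt (obsProb Models μ) q) ≤
      ∑ σ, q σ * ∑ o, obsProb Models μ σ o *
        ∑ k, hellSq (postDist Models μ k σ o) (priorDist Models μ k) := by
  have hrow := fun {M} (hM : M ∈ coModels Models) σ o =>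
    (stdSimplex_of_mem_coModels hModels hM σ).1 o
  calc ∑ k, ∑ d, priorDist Models μ k d *
        hellSq (obsAt (condModel μ k d) q) (obsAt (obsProb Models μ) q)
      ≤ ∑ k, ∑ d, priorDist Models μ k d *
          ∑ σ, q σ * hellSq (condModel μ k d σ) (obsProb Models μ σ) :=
        Finset.sum_le_sum fun k _ => Finset.sum_le_sum fun d _ =>
          mul_le_mul_of_nonneg_left (hellSq_obsAt_le (hrow (condModel_mem_coModels μ k d))
            (hrow (obsProb_mem_coModels μ)) hq.1) (priorDist_nonneg μ k d)
    _ = ∑ σ, q σ * ∑ k, ∑ d, priorDist Models μ k d *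
          hellSq (condModel μ k d σ) (obsProb Models μ σ) := by
        simp only [Finset.mul_sum]
        rw [Finset.sum_comm]
        refine Finset.sum_congr rfl fun σ _ => ?_
        rw [Finset.sum_comm]
        exact Finset.sum_congr rfl fun _ _ => Finset.sum_congr rfl fun _ _ => by ring
    _ = ∑ σ, q σ * ∑ o, obsProb Models μ σ o *
          ∑ k, hellSq (postDist Models μ k σ o) (priorDist Models μ k) := by
        simp only [sum_priorDist_mul_hellSq_condModel hModels, Finset.mul_sum]
        exact Finset.sum_congr rfl fun σ _ => Finset.sum_comm

lemma infrObjective_le (hγ : 0 ≤ γ) (hModels : ∀ M ∈ Models, ∀ σ, M σ ∈ stdSimplex ℝ Obs)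
    (hAffine : HasAffineSwitchedValues Models reward Sw)
    (hNonneg : HasNonnegDeviation (coModels Models) reward Sw)
    (μ : FinDist (↥Models × ∀ k, Dev k)) {q : Sig → ℝ} (hq : q ∈ stdSimplex ℝ Sig) :
    infrObjective γ Models reward Sw μ q ≤
      ∑ k, ∑ d, priorDist Models μ k d * (hgap Sw reward (condModel μ k d) q -
        γ * hellSq (obsAt (condModel μ k d) q) (obsAt (obsProb Models μ) q)) := by
  have hgain := sum_mul_deviation_gain_le hAffine hNonneg μ hq
  have hinfo := sum_priorDist_mul_hellSq_obsAt_le hModels μ hq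
  have hinfo' := mul_le_mul_of_nonneg_left hinfo hγ
  simp only [mul_sub, Finset.sum_sub_distrib, mul_left_comm _ γ, ← Finset.mul_sum]
  unfold infrObjective
  linarith

lemma exists_infrObjective_le_mul_iSup_decObjective (hγ : 0 ≤ γ)
    (hreward : ∀ k o, reward k o ∈ Set.Icc (0 : ℝ) 1)
    (hModels : ∀ M ∈ Models, ∀ σ, M σ ∈ stdSimplex ℝ Obs)
    (hSw : ∀ k d π, π ∈ stdSimplex ℝ Sig → Sw k d π ∈ stdSimplex ℝ Sig)
    (hAffine : HasAffineSwitchedValues Models reward Sw)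
    (hNonneg : HasNonnegDeviation (coModels Models) reward Sw)
    (μ : FinDist (↥Models × ∀ k, Dev k)) (p : FinDist {π : Sig → ℝ // π ∈ stdSimplex ℝ Sig}) :
    ∃ π : {π : Sig → ℝ // π ∈ stdSimplex ℝ Sig}, infrObjective γ Models reward Sw μ π.1 ≤
      K * ⨆ M : coModels Models, decObjective γ reward Sw p M.1 (obsProb Models μ) := by
  obtain ⟨g, hg⟩ := exists_infrObjective_eq_sum_mul (γ := γ) (reward := reward) (Sw := Sw) μ
  set D := ⨆ M : coModels Models, decObjective γ reward Sw p M.1 (obsProb Models μ)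
  have hD : ∀ k d, decObjective γ reward Sw p (condModel μ k d) (obsProb Models μ) ≤ D :=
    fun k d => le_ciSup (f := fun M : coModels Models => decObjective γ reward Sw p M.1 _)
      (bddAbove_range_decObjective hγ hreward hModels hSw p _)
      ⟨condModel μ k d, condModel_mem_coModels μ k d⟩
  refine ⟨⟨∑ q ∈ p.1.support, p.1 q • q.1, (convex_stdSimplex ℝ Sig).sum_mem
    (fun q _ => p.2.1 q) p.sum_support fun q _ => q.2⟩, ?_⟩
  calc infrObjective γ Models reward Sw μ (∑ q ∈ p.1.support, p.1 q • q.1)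
      = ∑ q ∈ p.1.support, p.1 q * infrObjective γ Models reward Sw μ q.1 := by
        simp only [hg, sum_sum_smul_mul]
    _ ≤ ∑ q ∈ p.1.support, p.1 q * ∑ k, ∑ d, priorDist Models μ k d *
          (hgap Sw reward (condModel μ k d) q.1 -
            γ * hellSq (obsAt (condModel μ k d) q.1) (obsAt (obsProb Models μ) q.1)) :=
        Finset.sum_le_sum fun q _ => mul_le_mul_of_nonneg_left
          (infrObjective_le hγ hModels hAffine hNonneg μ q.2) (p.2.1 q)
    _ = ∑ k, ∑ d, priorDist Models μ k d *
          decObjective γ reward Sw p (condModel μ k d) (obsProb Models μ) := by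
        simp only [decObjective, Finsupp.sum, Finset.mul_sum]
        rw [Finset.sum_comm]
        refine Finset.sum_congr rfl fun k _ => ?_
        rw [Finset.sum_comm]
        exact Finset.sum_congr rfl fun d _ => Finset.sum_congr rfl fun q _ => by ring
    _ ≤ ∑ k : Fin K, ∑ d, priorDist Models μ k d * D :=
        Finset.sum_le_sum fun k _ => Finset.sum_le_sum fun d _ =>
          mul_le_mul_of_nonneg_left (hD k d) (priorDist_nonneg μ k d)
    _ = K * D := by simp [← Finset.sum_mul, sum_priorDist]

lemma iInf_infrObjective_le_mul_decoregCo [Nonempty Sig] (hγ : 0 ≤ γ)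
    (hreward : ∀ k o, reward k o ∈ Set.Icc (0 : ℝ) 1)
    (hModels : ∀ M ∈ Models, ∀ σ, M σ ∈ stdSimplex ℝ Obs)
    (hSw : ∀ k d π, π ∈ stdSimplex ℝ Sig → Sw k d π ∈ stdSimplex ℝ Sig)
    (hAffine : HasAffineSwitchedValues Models reward Sw)
    (hNonneg : HasNonnegDeviation (coModels Models) reward Sw)
    (μ : FinDist (↥Models × ∀ k, Dev k)) :
    ⨅ π : {π : Sig → ℝ // π ∈ stdSimplex ℝ Sig}, infrObjective γ Models reward Sw μ π.1 ≤
      K * decoregCo γ Models reward Sw := by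
  obtain ⟨g, hg⟩ := exists_infrObjective_eq_sum_mul (γ := γ) (reward := reward) (Sw := Sw) μ
  have hbdd : BddBelow (Set.range fun π : {π : Sig → ℝ // π ∈ stdSimplex ℝ Sig} =>
      infrObjective γ Models reward Sw μ π.1) := by
    simpa only [hg] using bddBelow_range_sum_mul_stdSimplex g
  calc ⨅ π : {π : Sig → ℝ // π ∈ stdSimplex ℝ Sig}, infrObjective γ Models reward Sw μ π.1
      ≤ ⨅ p, K * ⨆ M : coModels Models, decObjective γ reward Sw p M.1 (obsProb Models μ) :=
        le_ciInf fun p => by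
          obtain ⟨π, hπ⟩ := exists_infrObjective_le_mul_iSup_decObjective hγ hreward hModels
            hSw hAffine hNonneg μ p
          exact (ciInf_le hbdd π).trans hπ
    _ = K * ⨅ p, ⨆ M : coModels Models, decObjective γ reward Sw p M.1 (obsProb Models μ) :=
        (Real.mul_iInf_of_nonneg (Nat.cast_nonneg K) _).symm
    _ ≤ K * decoregCo γ Models reward Sw :=
        mul_le_mul_of_nonneg_left (iInf_iSup_decObjective_le_decoregCo hγ hreward hModels hSw
          hNonneg (obsProb_mem_coModels μ)) (Nat.cast_nonneg K)

end InformationRatio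

theorem infr_le_K_mul_decoregCo_general (K : ℕ)
    (Sigk : Fin K → Type) [∀ k, Fintype (Sigk k)] [∀ k, Nonempty (Sigk k)]
    (Obs : Type) [Fintype Obs]
    (Dev : Fin K → Type) [∀ k, Fintype (Dev k)]
    (reward : Fin K → Obs → ℝ)
    (hreward : ∀ k o, reward k o ∈ Set.Icc (0 : ℝ) 1)
    (Models : Set ((∀ k, Sigk k) → Obs → ℝ))
    (hModels : ∀ M ∈ Models, ∀ σ, M σ ∈ stdSimplex ℝ Obs)
    (Sw : ∀ k, Dev k → ((∀ k, Sigk k) → ℝ) → ((∀ k, Sigk k) → ℝ))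
    (hSw : ∀ k d π, π ∈ stdSimplex ℝ (∀ k, Sigk k) →
      Sw k d π ∈ stdSimplex ℝ (∀ k, Sigk k))
    -- Assumption 1: `π ↦ f^M_k(Sw_k(dev, π))` is affine on the simplex
    (hAffine : ∀ M ∈ Models, ∀ (k : Fin K) (d : Dev k),
      ∀ π₁ π₂ : (∀ k, Sigk k) → ℝ,
        π₁ ∈ stdSimplex ℝ (∀ k, Sigk k) → π₂ ∈ stdSimplex ℝ (∀ k, Sigk k) →
        ∀ t : ℝ, 0 ≤ t → t ≤ 1 →
          fmix M reward k (Sw k d fun σ => t * π₁ σ + (1 - t) * π₂ σ) =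
            t * fmix M reward k (Sw k d π₁) + (1 - t) * fmix M reward k (Sw k d π₂))
    -- nonnegative-deviation assumption for `co(J)`
    (hNonneg : ∀ Mb ∈ coModels Models, ∀ k : Fin K,
      ∀ π ∈ stdSimplex ℝ (∀ k, Sigk k),
        0 ≤ (⨆ d : Dev k, fmix Mb reward k (Sw k d π)) - fmix Mb reward k π)
    (γ : ℝ) (hγ : 0 < γ) :
    infrVal γ Models reward Sw ≤ K * decoregCo γ Models reward Sw :=
  Real.iSup_le
    (fun μ => iInf_infrObjective_le_mul_decoregCo hγ.le hreward hModels hSw hAffine hNonneg μ)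
    (mul_nonneg (Nat.cast_nonneg K) (decoregCo_nonneg hγ.le hreward hModels hSw hNonneg))

/-- the multi-agent information ratio is bounded by the DEC of the
convex hull: for a `K`-player instance `J` satisfying Assumption 1 (affineness of
the switched value functions) whose convex hull `co(J)` satisfies the
nonnegative-deviation assumption, for every `γ > 0`,
`infr_γ(J) ≤ K · decoreg_γ(co(J))`. -/
theorem infr_le_K_mul_decoregCo (K : ℕ) (hK : 0 < K)
    (Sigk : Fin K → Type) [∀ k, Fintype (Sigk k)] [∀ k, Nonempty (Sigk k)]
    (Obs : Type) [Fintype Obs] [Nonempty Obs]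
    (Dev : Fin K → Type) [∀ k, Fintype (Dev k)] [∀ k, Nonempty (Dev k)]
    (reward : Fin K → Obs → ℝ)
    (hreward : ∀ k o, reward k o ∈ Set.Icc (0 : ℝ) 1)
    (Models : Set ((∀ k, Sigk k) → Obs → ℝ))
    (hModels : ∀ M ∈ Models, ∀ σ, M σ ∈ stdSimplex ℝ Obs)
    (Sw : ∀ k, Dev k → ((∀ k, Sigk k) → ℝ) → ((∀ k, Sigk k) → ℝ))
    (hSw : ∀ k d π, π ∈ stdSimplex ℝ (∀ k, Sigk k) →
      Sw k d π ∈ stdSimplex ℝ (∀ k, Sigk k))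
    -- Assumption 1: `π ↦ f^M_k(Sw_k(dev, π))` is affine on the simplex
    (hAffine : ∀ M ∈ Models, ∀ (k : Fin K) (d : Dev k),
      ∀ π₁ π₂ : (∀ k, Sigk k) → ℝ,
        π₁ ∈ stdSimplex ℝ (∀ k, Sigk k) → π₂ ∈ stdSimplex ℝ (∀ k, Sigk k) →
        ∀ t : ℝ, 0 ≤ t → t ≤ 1 →
          fmix M reward k (Sw k d fun σ => t * π₁ σ + (1 - t) * π₂ σ) =
            t * fmix M reward k (Sw k d π₁) + (1 - t) * fmix M reward k (Sw k d π₂))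
    -- nonnegative-deviation assumption for `co(J)`
    (hNonneg : ∀ Mb ∈ coModels Models, ∀ k : Fin K,
      ∀ π ∈ stdSimplex ℝ (∀ k, Sigk k),
        0 ≤ (⨆ d : Dev k, fmix Mb reward k (Sw k d π)) - fmix Mb reward k π)
    (γ : ℝ) (hγ : 0 < γ) :
    infrVal γ Models reward Sw ≤ K * decoregCo γ Models reward Sw :=
  infr_le_K_mul_decoregCo_general K Sigk Obs Dev reward hreward Models hModels Sw hSw hAffine
    hNonneg γ hγ
end

section
/- In the two-player lower-bound construction, for any function Φ (mapping 𝒯₁, 𝒯₂ into codeword functions as in the construction) and any algorithm interacting for T₀ rounds and outputting a decision π̂ ∈ Π, there exists i ∈ {1,2} such that P^{M₀}( for all T ∈ 𝒯_i : h^{M_T}(π̂) ≥ δ ) ≥ 1/2, where P^{M₀} is the law of the algorithm's interaction when the true model is M₀, and h^{M}(π) := Σ_{k=1,2}( max_{π'_k ∈ Π_k} f^{M}_k(π'_k, π_{−k}) − f^{M}_k(π) ). -/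
open Finset
open scoped Classical BigOperators

/-! ## The two-player zero-sum lower-bound construction

Parameters: `ε ∈ (0,1)`, `N` a multiple of `3`, `n = q = 2N/ε`.  Player 1's
decisions are `Π₁ = [2n]` (encoded as `Fin (2n)`, with index `i < n`
representing coordinate `i+1 ∈ [n]` and index `i ≥ n` representing coordinate
`i+1 ∈ [n+1, 2n]`), player 2's decisions are `Π₂ = {0, 1, …, 2q}` (encoded
as `Fin (2q+1)`, with `0` the safe action, values `1, …, q` the range of the
codewords for `𝒯₁`-models and `q+1, …, 2q` the range for `𝒯₂`-models).
An observation is a pair of a reward index `j ∈ Fin 3` (decoding to the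
deterministic zero-sum reward pairs `(0,0)`, `(1,−1)`, `(−δ, δ)` respectively,
where `δ = 10⁻³`) and a pure observation `o∘ ∈ [N]`.  The encoding function `Φ`
is represented by `Φ₁ Φ₂ : Finset (Fin N) → Fin n → Fin q`, where for
`T ∈ 𝒯₁` (i.e. `T.card = N/3`) the codeword is `i ↦ Φ₁ T i` (with second
coordinate encoded as `(Φ₁ T i) + 1 ∈ {1, …, q}`), and for `T ∈ 𝒯₂`
(i.e. `T.card = 2N/3`) the codeword is `n + i ↦ q + 1 + Φ₂ T i`. -/

section TwoPlayerLB

variable (N n q : ℕ)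

/-- The joint pure decision set `Π = Π₁ × Π₂`. -/
abbrev JointDec := Fin (2 * n) × Fin (2 * q + 1)

/-- The observation space: a reward index and a pure observation in `[N]`. -/
abbrev LBObs (N : ℕ) := Fin 3 × Fin N

/-- Player 1's reward decoded from the reward index (`δ = 10⁻³`). -/
noncomputable def rdecode : Fin 3 → ℝ := ![0, 1, -(1 / 1000)]

variable (Φ₁ Φ₂ : Finset (Fin N) → Fin n → Fin q)

/-- Membership `π ∈ B*(T)`. -/
def inBstar (T : Finset (Fin N)) (π : JointDec n q) : Prop :=
  if T.card = N / 3 then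
    ∃ i : Fin n, (π.1 : ℕ) = (i : ℕ) ∧ (π.2 : ℕ) = (Φ₁ T i : ℕ) + 1
  else
    ∃ i : Fin n, (π.1 : ℕ) = n + (i : ℕ) ∧ (π.2 : ℕ) = q + 1 + (Φ₂ T i : ℕ)

/-- The deterministic reward index of the model `M_T` at decision `π`:
rewards `(0,0)` if `π₂ = 0`, `(−δ, δ)` if `π ∈ B*(T)`, and `(1, −1)` otherwise. -/
noncomputable def ridxT (T : Finset (Fin N)) (π : JointDec n q) : Fin 3 :=
  if (π.2 : ℕ) = 0 then 0 else if inBstar N n q Φ₁ Φ₂ T π then 2 else 1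

/-- The reward index used by the models `M₀` and `M_{T,0}` (as if `B* = ∅`). -/
noncomputable def ridx0 (π : JointDec n q) : Fin 3 :=
  if (π.2 : ℕ) = 0 then 0 else 1

/-- The model `M_T`: deterministic rewards given by `ridxT`, pure observation
uniform on `T`. -/
noncomputable def modelT (T : Finset (Fin N)) (π : JointDec n q) :
    LBObs N → ℝ :=
  fun o => if o.1 = ridxT N n q Φ₁ Φ₂ T π ∧ o.2 ∈ T then ((T.card : ℝ))⁻¹ else 0

/-- The model `M_{T,0}`: rewards of `M₀` (as if `B* = ∅`), pure observation
uniform on `T`. -/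
noncomputable def modelT0 (T : Finset (Fin N)) (π : JointDec n q) :
    LBObs N → ℝ :=
  fun o => if o.1 = ridx0 n q π ∧ o.2 ∈ T then ((T.card : ℝ))⁻¹ else 0

/-- The model `M₀`: rewards as if `B* = ∅`, pure observation uniform on `[N]`. -/
noncomputable def model0 (π : JointDec n q) : LBObs N → ℝ :=
  fun o => if o.1 = ridx0 n q π then ((N : ℝ))⁻¹ else 0

/-- Expected reward `f^M_k` of player `k ∈ {0,1}` (zero-sum: `f₂ = −f₁`) under a
kernel `M` at the pure decision `π`. -/
noncomputable def fLB (M : JointDec n q → LBObs N → ℝ) (k : Fin 2)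
    (π : JointDec n q) : ℝ :=
  ∑ o, M π o * (if k = 0 then rdecode o.1 else -rdecode o.1)

/-- The Nash gap `h^M(π) = Σ_{k=1,2} (max_{π'_k} f^M_k(π'_k, π_{−k}) − f^M_k(π))`. -/
noncomputable def gapLB (M : JointDec n q → LBObs N → ℝ) (π : JointDec n q) : ℝ :=
  ((⨆ a : Fin (2 * n), fLB N n q M 0 (a, π.2)) - fLB N n q M 0 π)
    + ((⨆ b : Fin (2 * q + 1), fLB N n q M 1 (π.1, b)) - fLB N n q M 1 π)

/-- The index set `𝒯₁ ∪ 𝒯₂` of the model class. -/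
abbrev TIdx (N : ℕ) := {T : Finset (Fin N) // T.card = N / 3 ∨ T.card = 2 * N / 3}

/-- The mixture model `Σ_T ν(T) · M_T` determined by `ν ∈ Δ(𝒯₁ ∪ 𝒯₂)`; the
elements of `co(M)` are exactly those mixtures. -/
noncomputable def mixT (ν : TIdx N → ℝ) (π : JointDec n q) : LBObs N → ℝ :=
  fun o => ∑ T : TIdx N, ν T * modelT N n q Φ₁ Φ₂ T.1 π o

/-- The offset DEC of the convexified lower-bound instance,
`decoreg_γ(co(J)) = sup_{M̄ ∈ co(M)} inf_{p ∈ Δ(Π)} sup_{M ∈ co(M)}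
  E_{π∼p}[ h^M(π) − γ·H²(M(π), M̄(π)) ]`. -/
noncomputable def decoregLB (γ : ℝ) : ℝ :=
  ⨆ νb : {v : TIdx N → ℝ // v ∈ stdSimplex ℝ (TIdx N)},
    ⨅ p : {p : JointDec n q → ℝ // p ∈ stdSimplex ℝ (JointDec n q)},
      ⨆ ν : {v : TIdx N → ℝ // v ∈ stdSimplex ℝ (TIdx N)},
        ∑ π, p.1 π *
          (gapLB N n q (mixT N n q Φ₁ Φ₂ ν.1) π
            - γ * hellSq (mixT N n q Φ₁ Φ₂ ν.1 π) (mixT N n q Φ₁ Φ₂ νb.1 π))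

/-- **Condition 1** (minimum distance): within each family `𝒯_i`, codewords of
distinct sets differ in at least `q − N + 1` of their `n` coordinates. -/
def Condition1 : Prop :=
  (∀ T T' : Finset (Fin N), T.card = N / 3 → T'.card = N / 3 → T ≠ T' →
    q - N + 1 ≤ (Finset.univ.filter fun i : Fin n => Φ₁ T i ≠ Φ₁ T' i).card) ∧
  (∀ T T' : Finset (Fin N), T.card = 2 * N / 3 → T'.card = 2 * N / 3 → T ≠ T' →
    q - N + 1 ≤ (Finset.univ.filter fun i : Fin n => Φ₂ T i ≠ Φ₂ T' i).card)

/-- **Condition 2** (near-uniformity of codeword symbols conditioned on any small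
set `Q` being contained in `T`): `P_{T ∼ Unif(𝒯_i)}(Φ(T)(a₁) = a₂ | Q ⊆ T) ≤ 2/q`
(stated in cross-multiplied form). -/
def Condition2 : Prop :=
  (∀ Q : Finset (Fin N), (Q.card : ℝ) ≤ Real.sqrt N →
    ∀ (a₁ : Fin n) (a₂ : Fin q),
      ((Finset.univ.filter fun T : Finset (Fin N) =>
          T.card = N / 3 ∧ Q ⊆ T ∧ Φ₁ T a₁ = a₂).card : ℝ) ≤
        (2 / (q : ℝ)) *
          ((Finset.univ.filter fun T : Finset (Fin N) =>
            T.card = N / 3 ∧ Q ⊆ T).card : ℝ)) ∧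
  (∀ Q : Finset (Fin N), (Q.card : ℝ) ≤ Real.sqrt N →
    ∀ (a₁ : Fin n) (a₂ : Fin q),
      ((Finset.univ.filter fun T : Finset (Fin N) =>
          T.card = 2 * N / 3 ∧ Q ⊆ T ∧ Φ₂ T a₁ = a₂).card : ℝ) ≤
        (2 / (q : ℝ)) *
          ((Finset.univ.filter fun T : Finset (Fin N) =>
            T.card = 2 * N / 3 ∧ Q ⊆ T).card : ℝ))

end TwoPlayerLB

section Algorithms

/-- An algorithm interacting for `T₀` rounds with decision set `P` and
observation set `O`: at round `t` it plays a randomized decision depending on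
the history of the first `t` rounds, and after `T₀` rounds it outputs a
randomized decision. -/
structure LBAlg (P O : Type) (T₀ : ℕ) where
  dec : (t : ℕ) → (Fin t → P × O) → P → ℝ
  out : (Fin T₀ → P × O) → P → ℝ

/-- The randomization at every round, and for the output, is a valid probability
distribution. -/
def LBAlg.Valid {P O : Type} [Fintype P] {T₀ : ℕ} (alg : LBAlg P O T₀) : Prop :=
  (∀ (t : ℕ) (h : Fin t → P × O), alg.dec t h ∈ stdSimplex ℝ P) ∧
  (∀ h : Fin T₀ → P × O, alg.out h ∈ stdSimplex ℝ P)

/-- Probability that the interaction of the algorithm `alg` with the true model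
(kernel) `M` produces exactly the `T₀`-round history `h`. -/
noncomputable def algProbHist {P O : Type} [Fintype P] [Fintype O] {T₀ : ℕ}
    (alg : LBAlg P O T₀) (M : P → O → ℝ) (h : Fin T₀ → P × O) : ℝ :=
  ∏ t : Fin T₀,
    alg.dec t.1 (fun s => h ⟨s.1, s.2.trans t.2⟩) (h t).1 * M (h t).1 (h t).2

/-- Probability, under the interaction of `alg` with the model `M`, of an event
`E` over `T₀`-round histories. -/
noncomputable def algProbEvent {P O : Type} [Fintype P] [Fintype O] {T₀ : ℕ}
    (alg : LBAlg P O T₀) (M : P → O → ℝ) (E : Set (Fin T₀ → P × O)) : ℝ :=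
  ∑ h : Fin T₀ → P × O, if h ∈ E then algProbHist alg M h else 0

/-- Probability, under the interaction of `alg` with the model `M`, that the
output decision `pihat` lies in `E ⊆ P`. -/
noncomputable def algProbOut {P O : Type} [Fintype P] [Fintype O] {T₀ : ℕ}
    (alg : LBAlg P O T₀) (M : P → O → ℝ) (E : Set P) : ℝ :=
  ∑ h : Fin T₀ → P × O, algProbHist alg M h *
    ∑ p : P, if p ∈ E then alg.out h p else 0

/-- Expectation, under the interaction of `alg` with the model `M`, of a function
`φ` of the output decision `pihat`. -/
noncomputable def algExpOut {P O : Type} [Fintype P] [Fintype O] {T₀ : ℕ}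
    (alg : LBAlg P O T₀) (M : P → O → ℝ) (φ : P → ℝ) : ℝ :=
  ∑ h : Fin T₀ → P × O, algProbHist alg M h * ∑ p : P, alg.out h p * φ p

end Algorithms

section AuxMass

variable {P O : Type} [Fintype P] [Fintype O]

/-- Total mass of the interaction law is `1`. -/
lemma mass_one (M : P → O → ℝ) (hM : ∀ p, ∑ o, M p o = 1) :
    ∀ (T₀ : ℕ) (d : (t : ℕ) → (Fin t → P × O) → P → ℝ)
      (_ : ∀ t h, ∑ p, d t h p = 1),
    ∑ h : Fin T₀ → P × O, ∏ t : Fin T₀,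
      d t.1 (fun s => h ⟨s.1, s.2.trans t.2⟩) (h t).1 * M (h t).1 (h t).2 = 1 := by
  intro T₀
  induction T₀ with
  | zero =>
    intro d hd
    simp
  | succ T ih =>
    intro d hd
    rw [← Equiv.sum_comp (Fin.consEquiv fun _ : Fin (T + 1) => P × O)]
    rw [Fintype.sum_prod_type]
    have hstep : ∀ (x : P × O) (g : Fin T → P × O),
        (∏ t : Fin (T + 1),
          d t.1 (fun s => (Fin.consEquiv fun _ => P × O) (x, g) ⟨s.1, s.2.trans t.2⟩)
            (((Fin.consEquiv fun _ => P × O) (x, g)) t).1 *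
            M (((Fin.consEquiv fun _ => P × O) (x, g)) t).1
              (((Fin.consEquiv fun _ => P × O) (x, g)) t).2)
          = (d 0 Fin.elim0 x.1 * M x.1 x.2) *
            ∏ t : Fin T,
              (fun t' : ℕ => fun h' : Fin t' → P × O => d (t' + 1) (Fin.cons x h')) t.1
                (fun s => g ⟨s.1, s.2.trans t.2⟩) (g t).1 * M (g t).1 (g t).2 := by
      intro x g
      have hc : (Fin.consEquiv fun _ : Fin (T+1) => P × O) (x, g) = Fin.cons x g := rfl
      rw [hc, Fin.prod_univ_succ]
      congr 1
      · have h0 : (Fin.cons x g : Fin (T+1) → P × O) 0 = x := rfl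
        rw [h0]
        have hzero : ∀ (k : ℕ) (hk : k = 0) (f : Fin k → P × O), d k f = d 0 Fin.elim0 := by
          intro k hk; subst hk; intro f
          have hf : f = Fin.elim0 := funext fun s => s.elim0
          rw [hf]
        exact congrArg (· * M x.1 x.2)
          (congrFun (hzero _ (Fin.val_zero _) _) x.1)
      · refine Finset.prod_congr rfl fun t _ => ?_
        have hsucc : (Fin.cons x g : Fin (T+1) → P × O) t.succ = g t := Fin.cons_succ _ _ _
        rw [hsucc]
        have hval : (t.succ : Fin (T+1)).1 = t.1 + 1 := rfl
        congr 1
        · congr 1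
          funext s
          refine Fin.cases ?_ ?_ s
          · have : (⟨(0 : Fin (t.1+1)).1, by omega⟩ : Fin (T+1)) = 0 := by
              ext; simp
            rw [this]; rfl
          · intro j
            have h1 : (⟨(j.succ : Fin (t.1+1)).1, by omega⟩ : Fin (T+1))
                = Fin.succ ⟨j.1, by omega⟩ := by ext; simp
            rw [h1, Fin.cons_succ, Fin.cons_succ]
    calc ∑ x : P × O, ∑ g : Fin T → P × O,
          (∏ t : Fin (T + 1),
            d t.1 (fun s => (Fin.consEquiv fun _ => P × O) (x, g) ⟨s.1, s.2.trans t.2⟩)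
              (((Fin.consEquiv fun _ => P × O) (x, g)) t).1 *
              M (((Fin.consEquiv fun _ => P × O) (x, g)) t).1
                (((Fin.consEquiv fun _ => P × O) (x, g)) t).2)
        = ∑ x : P × O, ∑ g : Fin T → P × O,
            (d 0 Fin.elim0 x.1 * M x.1 x.2) *
              ∏ t : Fin T,
                (fun t' : ℕ => fun h' : Fin t' → P × O => d (t' + 1) (Fin.cons x h')) t.1
                  (fun s => g ⟨s.1, s.2.trans t.2⟩) (g t).1 * M (g t).1 (g t).2 := by
          exact Finset.sum_congr rfl fun x _ => Finset.sum_congr rfl fun g _ => hstep x g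
      _ = ∑ x : P × O, (d 0 Fin.elim0 x.1 * M x.1 x.2) * 1 := by
          refine Finset.sum_congr rfl fun x _ => ?_
          rw [← Finset.mul_sum]
          exact congrArg (d 0 Fin.elim0 x.1 * M x.1 x.2 * ·)
            (ih (fun t' h' => d (t' + 1) (Fin.cons x h')) (fun t h => hd _ _))
      _ = 1 := by
          simp only [mul_one]
          rw [Fintype.sum_prod_type]
          have : ∀ p : P, ∑ o : O, d 0 Fin.elim0 p * M p o = d 0 Fin.elim0 p := by
            intro p; rw [← Finset.mul_sum, hM p, mul_one]
          rw [Finset.sum_congr rfl fun p _ => this p, hd 0 Fin.elim0]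

end AuxMass

section GapAux

variable {N n q : ℕ} (Φ₁ Φ₂ : Finset (Fin N) → Fin n → Fin q)

lemma sum_point (r : Fin 3) (S : Finset (Fin N)) (hS : S.Nonempty) (g : Fin 3 → ℝ) :
    ∑ o : LBObs N, (if o.1 = r ∧ o.2 ∈ S then ((S.card : ℝ))⁻¹ else 0) * g o.1 = g r := by
  rw [Fintype.sum_prod_type]
  have hj : ∀ j : Fin 3,
      (∑ x : Fin N, (if j = r ∧ x ∈ S then ((S.card : ℝ))⁻¹ else 0) * g j)
        = if j = r then g r else 0 := by
    intro j
    by_cases hjr : j = r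
    · subst hjr
      rw [if_pos rfl, ← Finset.sum_mul]
      have h1 : (∑ x : Fin N, if j = j ∧ x ∈ S then ((S.card : ℝ))⁻¹ else 0) = 1 := by
        have : ∀ x : Fin N, (if j = j ∧ x ∈ S then ((S.card : ℝ))⁻¹ else 0)
            = if x ∈ S then ((S.card : ℝ))⁻¹ else 0 := by
          intro x; simp
        rw [Finset.sum_congr rfl fun x _ => this x, Finset.sum_ite_mem,
          Finset.univ_inter, Finset.sum_const, nsmul_eq_mul, mul_inv_cancel₀]
        exact_mod_cast Finset.card_ne_zero.mpr hS
      rw [h1, one_mul]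
    · rw [if_neg hjr]
      refine Finset.sum_eq_zero fun x _ => ?_
      rw [if_neg (fun hc => hjr hc.1), zero_mul]
  rw [Finset.sum_congr rfl fun j _ => hj j]
  simp

lemma fLB_modelT (T : Finset (Fin N)) (hT : T.Nonempty) (k : Fin 2) (π : JointDec n q) :
    fLB N n q (modelT N n q Φ₁ Φ₂ T) k π
      = if k = 0 then rdecode (ridxT N n q Φ₁ Φ₂ T π)
        else -rdecode (ridxT N n q Φ₁ Φ₂ T π) := by
  unfold fLB modelT
  exact sum_point _ T hT (fun j => if k = 0 then rdecode j else -rdecode j)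

lemma rdecode0 : rdecode 0 = 0 := rfl
lemma rdecode1 : rdecode 1 = 1 := rfl
lemma rdecode2 : rdecode 2 = -(1 / 1000) := rfl

lemma gap_case1 (hN : 0 < N) (hN3 : N % 3 = 0) (hn : 0 < n) (hqn : q = n)
    (T : Finset (Fin N)) (hT : T.card = N / 3) (π : JointDec n q)
    (hπ : (π.1 : ℕ) < n) :
    (1 / 1000 : ℝ) ≤ gapLB N n q (modelT N n q Φ₁ Φ₂ T) π := by
  have hq0 : 0 < q := hqn ▸ hn
  have hTne : T.Nonempty := Finset.card_pos.mp (by omega)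
  have hF := fLB_modelT Φ₁ Φ₂ T hTne
  have hbdd0 : BddAbove (Set.range fun a : Fin (2 * n) =>
      fLB N n q (modelT N n q Φ₁ Φ₂ T) 0 (a, π.2)) :=
    Set.Finite.bddAbove (Set.finite_range _)
  have hbdd1 : BddAbove (Set.range fun b : Fin (2 * q + 1) =>
      fLB N n q (modelT N n q Φ₁ Φ₂ T) 1 (π.1, b)) :=
    Set.Finite.bddAbove (Set.finite_range _)
  have hsup0s : fLB N n q (modelT N n q Φ₁ Φ₂ T) 0 π
      ≤ ⨆ a : Fin (2 * n), fLB N n q (modelT N n q Φ₁ Φ₂ T) 0 (a, π.2) := by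
    have := le_ciSup hbdd0 π.1
    simpa using this
  have hsup1s : fLB N n q (modelT N n q Φ₁ Φ₂ T) 1 π
      ≤ ⨆ b : Fin (2 * q + 1), fLB N n q (modelT N n q Φ₁ Φ₂ T) 1 (π.1, b) := by
    have := le_ciSup hbdd1 π.2
    simpa using this
  unfold gapLB
  by_cases h0 : (π.2 : ℕ) = 0
  · set i0 : Fin n := ⟨π.1, hπ⟩ with hi0
    set b : Fin (2 * q + 1) := ⟨(Φ₁ T i0 : ℕ) + 1, by have := (Φ₁ T i0).2; omega⟩ with hb
    have hb0 : (b : ℕ) ≠ 0 := Nat.succ_ne_zero _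
    have hin : inBstar N n q Φ₁ Φ₂ T (π.1, b) := by
      unfold inBstar; rw [if_pos hT]; exact ⟨i0, rfl, rfl⟩
    have hridxb : ridxT N n q Φ₁ Φ₂ T (π.1, b) = 2 := by
      unfold ridxT; rw [if_neg hb0, if_pos hin]
    have hridxπ : ridxT N n q Φ₁ Φ₂ T π = 0 := by unfold ridxT; rw [if_pos h0]
    have h1b : fLB N n q (modelT N n q Φ₁ Φ₂ T) 1 (π.1, b) = 1 / 1000 := by
      rw [hF 1 (π.1, b), if_neg (by decide), hridxb, rdecode2, neg_neg]
    have h1π : fLB N n q (modelT N n q Φ₁ Φ₂ T) 1 π = 0 := by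
      rw [hF 1 π, if_neg (by decide), hridxπ, rdecode0, neg_zero]
    have hsup1 : (1 / 1000 : ℝ)
        ≤ ⨆ b' : Fin (2 * q + 1), fLB N n q (modelT N n q Φ₁ Φ₂ T) 1 (π.1, b') :=
      h1b ▸ le_ciSup hbdd1 b
    linarith
  · by_cases hB : inBstar N n q Φ₁ Φ₂ T π
    · set a0 : Fin (2 * n) := ⟨n, by omega⟩ with ha0
      have hnotB : ¬ inBstar N n q Φ₁ Φ₂ T (a0, π.2) := by
        unfold inBstar; rw [if_pos hT]
        rintro ⟨i, hi, -⟩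
        have := i.2
        simp only [ha0] at hi
        omega
      have hra : ridxT N n q Φ₁ Φ₂ T (a0, π.2) = 1 := by
        unfold ridxT; rw [if_neg h0, if_neg hnotB]
      have hrπ : ridxT N n q Φ₁ Φ₂ T π = 2 := by
        unfold ridxT; rw [if_neg h0, if_pos hB]
      have h0a : fLB N n q (modelT N n q Φ₁ Φ₂ T) 0 (a0, π.2) = 1 := by
        rw [hF 0 (a0, π.2), if_pos rfl, hra, rdecode1]
      have h0π : fLB N n q (modelT N n q Φ₁ Φ₂ T) 0 π = -(1 / 1000) := by
        rw [hF 0 π, if_pos rfl, hrπ, rdecode2]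
      have hsup0 : (1 : ℝ)
          ≤ ⨆ a : Fin (2 * n), fLB N n q (modelT N n q Φ₁ Φ₂ T) 0 (a, π.2) :=
        h0a ▸ le_ciSup hbdd0 a0
      linarith
    · have hrπ : ridxT N n q Φ₁ Φ₂ T π = 1 := by
        unfold ridxT; rw [if_neg h0, if_neg hB]
      have h1π : fLB N n q (modelT N n q Φ₁ Φ₂ T) 1 π = -1 := by
        rw [hF 1 π, if_neg (by decide), hrπ, rdecode1]
      have hr0 : ridxT N n q Φ₁ Φ₂ T (π.1, (0 : Fin (2 * q + 1))) = 0 := by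
        unfold ridxT; rw [if_pos (Fin.val_zero _)]
      have h10 : fLB N n q (modelT N n q Φ₁ Φ₂ T) 1 (π.1, 0) = 0 := by
        rw [hF 1 (π.1, 0), if_neg (by decide), hr0, rdecode0, neg_zero]
      have hsup1 : (0 : ℝ)
          ≤ ⨆ b' : Fin (2 * q + 1), fLB N n q (modelT N n q Φ₁ Φ₂ T) 1 (π.1, b') :=
        h10 ▸ le_ciSup hbdd1 (0 : Fin (2 * q + 1))
      linarith

lemma gap_case2 (hN : 0 < N) (hN3 : N % 3 = 0) (hn : 0 < n) (hqn : q = n)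
    (T : Finset (Fin N)) (hT : T.card = 2 * N / 3) (π : JointDec n q)
    (hπ : n ≤ (π.1 : ℕ)) :
    (1 / 1000 : ℝ) ≤ gapLB N n q (modelT N n q Φ₁ Φ₂ T) π := by
  have hq0 : 0 < q := hqn ▸ hn
  have hTcn : T.card ≠ N / 3 := by omega
  have hTne : T.Nonempty := Finset.card_pos.mp (by omega)
  have hF := fLB_modelT Φ₁ Φ₂ T hTne
  have hbdd0 : BddAbove (Set.range fun a : Fin (2 * n) =>
      fLB N n q (modelT N n q Φ₁ Φ₂ T) 0 (a, π.2)) :=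
    Set.Finite.bddAbove (Set.finite_range _)
  have hbdd1 : BddAbove (Set.range fun b : Fin (2 * q + 1) =>
      fLB N n q (modelT N n q Φ₁ Φ₂ T) 1 (π.1, b)) :=
    Set.Finite.bddAbove (Set.finite_range _)
  have hsup0s : fLB N n q (modelT N n q Φ₁ Φ₂ T) 0 π
      ≤ ⨆ a : Fin (2 * n), fLB N n q (modelT N n q Φ₁ Φ₂ T) 0 (a, π.2) := by
    have := le_ciSup hbdd0 π.1
    simpa using this
  have hsup1s : fLB N n q (modelT N n q Φ₁ Φ₂ T) 1 π
      ≤ ⨆ b : Fin (2 * q + 1), fLB N n q (modelT N n q Φ₁ Φ₂ T) 1 (π.1, b) := by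
    have := le_ciSup hbdd1 π.2
    simpa using this
  unfold gapLB
  by_cases h0 : (π.2 : ℕ) = 0
  · have hπ2 : (π.1 : ℕ) < 2 * n := π.1.2
    set i0 : Fin n := ⟨(π.1 : ℕ) - n, by omega⟩ with hi0
    set b : Fin (2 * q + 1) := ⟨q + 1 + (Φ₂ T i0 : ℕ), by have := (Φ₂ T i0).2; omega⟩ with hb
    have hb0 : (b : ℕ) ≠ 0 := by simp only [hb]; omega
    have hin : inBstar N n q Φ₁ Φ₂ T (π.1, b) := by
      unfold inBstar; rw [if_neg hTcn]
      exact ⟨i0, by simp only [hi0]; omega, rfl⟩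
    have hridxb : ridxT N n q Φ₁ Φ₂ T (π.1, b) = 2 := by
      unfold ridxT; rw [if_neg hb0, if_pos hin]
    have hridxπ : ridxT N n q Φ₁ Φ₂ T π = 0 := by unfold ridxT; rw [if_pos h0]
    have h1b : fLB N n q (modelT N n q Φ₁ Φ₂ T) 1 (π.1, b) = 1 / 1000 := by
      rw [hF 1 (π.1, b), if_neg (by decide), hridxb, rdecode2, neg_neg]
    have h1π : fLB N n q (modelT N n q Φ₁ Φ₂ T) 1 π = 0 := by
      rw [hF 1 π, if_neg (by decide), hridxπ, rdecode0, neg_zero]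
    have hsup1 : (1 / 1000 : ℝ)
        ≤ ⨆ b' : Fin (2 * q + 1), fLB N n q (modelT N n q Φ₁ Φ₂ T) 1 (π.1, b') :=
      h1b ▸ le_ciSup hbdd1 b
    linarith
  · by_cases hB : inBstar N n q Φ₁ Φ₂ T π
    · set a0 : Fin (2 * n) := ⟨0, by omega⟩ with ha0
      have hnotB : ¬ inBstar N n q Φ₁ Φ₂ T (a0, π.2) := by
        unfold inBstar; rw [if_neg hTcn]
        rintro ⟨i, hi, -⟩
        simp only [ha0] at hi
        omega
      have hra : ridxT N n q Φ₁ Φ₂ T (a0, π.2) = 1 := by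
        unfold ridxT; rw [if_neg h0, if_neg hnotB]
      have hrπ : ridxT N n q Φ₁ Φ₂ T π = 2 := by
        unfold ridxT; rw [if_neg h0, if_pos hB]
      have h0a : fLB N n q (modelT N n q Φ₁ Φ₂ T) 0 (a0, π.2) = 1 := by
        rw [hF 0 (a0, π.2), if_pos rfl, hra, rdecode1]
      have h0π : fLB N n q (modelT N n q Φ₁ Φ₂ T) 0 π = -(1 / 1000) := by
        rw [hF 0 π, if_pos rfl, hrπ, rdecode2]
      have hsup0 : (1 : ℝ)
          ≤ ⨆ a : Fin (2 * n), fLB N n q (modelT N n q Φ₁ Φ₂ T) 0 (a, π.2) :=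
        h0a ▸ le_ciSup hbdd0 a0
      linarith
    · have hrπ : ridxT N n q Φ₁ Φ₂ T π = 1 := by
        unfold ridxT; rw [if_neg h0, if_neg hB]
      have h1π : fLB N n q (modelT N n q Φ₁ Φ₂ T) 1 π = -1 := by
        rw [hF 1 π, if_neg (by decide), hrπ, rdecode1]
      have hr0 : ridxT N n q Φ₁ Φ₂ T (π.1, (0 : Fin (2 * q + 1))) = 0 := by
        unfold ridxT; rw [if_pos (Fin.val_zero _)]
      have h10 : fLB N n q (modelT N n q Φ₁ Φ₂ T) 1 (π.1, 0) = 0 := by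
        rw [hF 1 (π.1, 0), if_neg (by decide), hr0, rdecode0, neg_zero]
      have hsup1 : (0 : ℝ)
          ≤ ⨆ b' : Fin (2 * q + 1), fLB N n q (modelT N n q Φ₁ Φ₂ T) 1 (π.1, b') :=
        h10 ▸ le_ciSup hbdd1 (0 : Fin (2 * q + 1))
      linarith

end GapAux

/-- Lemma: under `M₀`, with probability at least `1/2` the
algorithm's output has gap at least `δ` simultaneously for all models in one of
the two families: for any `Φ` and any `T₀`-round algorithm outputting `pihat ∈ Π`,
there is `i ∈ {1,2}` (encoded as `c : Bool`, `true ↔ 𝒯₁`) such that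
`P^{M₀}( ∀ T ∈ 𝒯_i, h^{M_T}(pihat) ≥ δ ) ≥ 1/2`. -/
theorem m0_halfprob (N n q : ℕ) (hN : 0 < N) (hN3 : N % 3 = 0) (hn : 0 < n)
    (ε : ℝ) (hε0 : 0 < ε) (hε1 : ε < 1)
    (hnval : (n : ℝ) = 2 * N / ε) (hq : q = n)
    (Φ₁ Φ₂ : Finset (Fin N) → Fin n → Fin q)
    (T₀ : ℕ) (alg : LBAlg (JointDec n q) (LBObs N) T₀) (halg : alg.Valid) :
    ∃ c : Bool,
      (1 / 2 : ℝ) ≤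
        algProbOut alg (model0 N n q)
          {pihat : JointDec n q |
            ∀ T : Finset (Fin N), T.card = (if c then N / 3 else 2 * N / 3) →
              (1 / 1000 : ℝ) ≤ gapLB N n q (modelT N n q Φ₁ Φ₂ T) pihat} := by
  classical
  have hM0sum : ∀ π : JointDec n q, ∑ o : LBObs N, model0 N n q π o = 1 := by
    intro π
    unfold model0
    rw [Fintype.sum_prod_type]
    have hj : ∀ j : Fin 3,
        (∑ _x : Fin N, if j = ridx0 n q π then ((N : ℝ))⁻¹ else 0)
          = if j = ridx0 n q π then 1 else 0 := by
      intro j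
      by_cases hjr : j = ridx0 n q π
      · rw [if_pos hjr]
        simp only [if_pos hjr, Finset.sum_const, Finset.card_univ, Fintype.card_fin,
          nsmul_eq_mul]
        exact mul_inv_cancel₀ (Nat.cast_ne_zero.mpr hN.ne')
      · simp [hjr]
    rw [Finset.sum_congr rfl fun j _ => hj j]
    simp
  have hmass : ∑ h : Fin T₀ → JointDec n q × LBObs N,
      algProbHist alg (model0 N n q) h = 1 := by
    have := mass_one (model0 N n q) hM0sum T₀ alg.dec (fun t h => (halg.1 t h).2)
    exact this
  have hhist_nonneg : ∀ h, 0 ≤ algProbHist alg (model0 N n q) h := by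
    intro h
    unfold algProbHist
    refine Finset.prod_nonneg fun t _ => mul_nonneg ((halg.1 _ _).1 _) ?_
    unfold model0
    split_ifs
    · positivity
    · exact le_rfl
  have hmono : ∀ (E F : Set (JointDec n q)), E ⊆ F →
      algProbOut alg (model0 N n q) E ≤ algProbOut alg (model0 N n q) F := by
    intro E F hEF
    unfold algProbOut
    refine Finset.sum_le_sum fun h _ => ?_
    refine mul_le_mul_of_nonneg_left ?_ (hhist_nonneg h)
    refine Finset.sum_le_sum fun p _ => ?_
    by_cases hpE : p ∈ E
    · rw [if_pos hpE, if_pos (hEF hpE)]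
    · rw [if_neg hpE]
      by_cases hpF : p ∈ F
      · rw [if_pos hpF]; exact (halg.2 h).1 p
      · rw [if_neg hpF]
  set E1 : Set (JointDec n q) := {π | (π.1 : ℕ) < n} with hE1
  have hsplit : algProbOut alg (model0 N n q) E1
      + algProbOut alg (model0 N n q) E1ᶜ = 1 := by
    unfold algProbOut
    rw [← Finset.sum_add_distrib, ← hmass]
    refine Finset.sum_congr rfl fun h _ => ?_
    rw [← mul_add]
    nth_rewrite 2 [← mul_one (algProbHist alg (model0 N n q) h)]
    congr 1
    rw [← (halg.2 h).2, ← Finset.sum_add_distrib]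
    refine Finset.sum_congr rfl fun p _ => ?_
    by_cases hp : p ∈ E1
    · rw [if_pos hp, if_neg (fun hc => hc hp), add_zero]
    · rw [if_neg hp, if_pos (show p ∈ E1ᶜ from hp), zero_add]
  have hsub1 : E1 ⊆ {pihat : JointDec n q |
      ∀ T : Finset (Fin N), T.card = (if true then N / 3 else 2 * N / 3) →
        (1 / 1000 : ℝ) ≤ gapLB N n q (modelT N n q Φ₁ Φ₂ T) pihat} := by
    intro π hπ T hTc
    rw [if_pos rfl] at hTc
    exact gap_case1 Φ₁ Φ₂ hN hN3 hn hq T hTc π hπ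
  have hsub2 : E1ᶜ ⊆ {pihat : JointDec n q |
      ∀ T : Finset (Fin N), T.card = (if false then N / 3 else 2 * N / 3) →
        (1 / 1000 : ℝ) ≤ gapLB N n q (modelT N n q Φ₁ Φ₂ T) pihat} := by
    intro π hπ T hTc
    rw [if_neg (by simp)] at hTc
    exact gap_case2 Φ₁ Φ₂ hN hN3 hn hq T hTc π (le_of_not_gt hπ)
  rcases le_total (1 / 2 : ℝ) (algProbOut alg (model0 N n q) E1) with hc | hc
  · exact ⟨true, le_trans hc (hmono _ _ hsub1)⟩
  · refine ⟨false, le_trans ?_ (hmono _ _ hsub2)⟩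
    linarith
end

section
/- In the two-player lower-bound construction, there is a universal constant C > 0 such that the following holds whenever Φ satisfies Condition 2 and the algorithm interacts for T₀ ≤ √N / C rounds: for each i ∈ {1,2}, (a) E_{T ∼ Unif(𝒯_i)} [ P^{M_{T,0}}( {π^1, …, π^{T₀}} ∩ B*(T) ≠ ∅ ) ] ≤ 2T₀/q + 1/100; and (b) for every measurable set F of T₀-round histories, | P^{M₀}( history ∈ F ) − E_{T ∼ Unif(𝒯_i)} [ P^{M_{T,0}}( history ∈ F ) ] | ≤ 1/100. -/
open Finset
open scoped Classical BigOperators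

/-!
Under `M₀` and `M_{T,0}` the reward index is the same deterministic function of the decision,
so the probability of a history is an algorithm-dependent weight times the probability of its
sequence of pure observations, and for every fixed observation sequence these weights sum to one.
Both claims thus become statements about observation sequences. For (a), a union bound over the
rounds leaves, for each round, the probability that `π^t ∈ B*(T)` jointly with the observed
points `Q` lying in `T`; Condition 2 applies since `|Q| ≤ T₀ ≤ √N`. For (b), the error is
the total-variation distance between `T₀` uniform draws from `[N]` and `T₀` uniform draws from a
uniformly random `m`-set (`m = N/3` or `2N/3`). On collision-free sequences the second law is the
smaller one, so this distance is at most twice its collision probability, which the birthday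
bound makes `≤ T₀² / m = O(T₀² / N)`.
-/

theorem sum_prod_prefix_mul_comp {Z Y : Type*} [Fintype Z] [Fintype Y] (obs : Z → Y)
    (w : (t : ℕ) → (Fin t → Z) → Z → ℝ)
    (hw : ∀ t hist (ψ : Y → ℝ), ∑ z, w t hist z * ψ (obs z) = ∑ y, ψ y) :
    ∀ (k : ℕ) (φ : (Fin k → Y) → ℝ),
      ∑ h : Fin k → Z,
        (∏ t : Fin k, w t (fun s => h ⟨s, s.2.trans t.2⟩) (h t)) * φ (obs ∘ h) = ∑ ω, φ ω
  | 0, φ => by simp [Subsingleton.elim (obs ∘ _) (default : Fin 0 → Y)]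
  | k + 1, φ => by
    -- split off the last round; summing out its `z` against `φ (Fin.snoc (obs ∘ g) ·)` is `hw`
    have hsnoc : ∀ (g : Fin k → Z) (z : Z),
        ∏ t : Fin (k + 1), w t (fun s => Fin.snoc (α := fun _ => Z) g z ⟨s, s.2.trans t.2⟩)
            (Fin.snoc (α := fun _ => Z) g z t)
          = (∏ t : Fin k, w t (fun s => g ⟨s, s.2.trans t.2⟩) (g t)) * w k g z := by
      intro g z
      rw [Fin.prod_univ_castSucc]
      congr 1
      · refine Finset.prod_congr rfl fun t _ => ?_
        congr 1
        · funext s; exact dif_pos (s.2.trans t.2)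
        · simp [Fin.snoc]
      · simp [Fin.snoc]
    rw [← (Fin.snocEquiv fun _ => Z).sum_comp, ← (Fin.snocEquiv fun _ => Y).sum_comp,
      Fintype.sum_prod_type_right, Fintype.sum_prod_type_right,
      ← sum_prod_prefix_mul_comp obs w hw k]
    refine Finset.sum_congr rfl fun g _ => ?_
    simp only [Fin.snocEquiv_apply, hsnoc, mul_assoc, ← Finset.mul_sum]
    congr 1
    rw [← hw k g]
    refine Finset.sum_congr rfl fun z _ => ?_
    congr 2
    funext i
    exact congrFun (Fin.comp_snoc obs g z) i

section Interaction

variable {P J X : Type} [DecidableEq J] {T₀ : ℕ}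

/-- With `ν = 1` this is not a probability kernel: `algProbHist alg (rewardObsModel r 1)` weighs
a history by the algorithm's choices alone. -/
def rewardObsModel (r : P → J) (ν : X → ℝ) (π : P) (o : J × X) : ℝ :=
  if o.1 = r π then ν o.2 else 0

lemma rewardObsModel_nonneg {r : P → J} {ν : X → ℝ} (hν : ∀ x, 0 ≤ ν x) (π : P)
    (o : J × X) : 0 ≤ rewardObsModel r ν π o := by
  unfold rewardObsModel; split_ifs <;> simp [hν]

variable [Fintype P] [Fintype J] [Fintype X]

lemma algProbHist_nonneg {O : Type} [Fintype O] {alg : LBAlg P O T₀} {M : P → O → ℝ}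
    (hdec : ∀ t hist, alg.dec t hist ∈ stdSimplex ℝ P) (hM : ∀ π o, 0 ≤ M π o)
    (h : Fin T₀ → P × O) : 0 ≤ algProbHist alg M h :=
  prod_nonneg fun _ _ => mul_nonneg ((hdec _ _).1 _) (hM _ _)

lemma algProbHist_rewardObsModel (alg : LBAlg P (J × X) T₀) (r : P → J) (ν : X → ℝ)
    (h : Fin T₀ → P × (J × X)) :
    algProbHist alg (rewardObsModel r ν) h
      = algProbHist alg (rewardObsModel r 1) h * ∏ t, ν (h t).2.2 := by
  rw [algProbHist, algProbHist, ← prod_mul_distrib]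
  refine prod_congr rfl fun t _ => ?_
  unfold rewardObsModel
  split_ifs <;> simp

lemma sum_algProbHist_mul (alg : LBAlg P (J × X) T₀)
    (hdec : ∀ t hist, alg.dec t hist ∈ stdSimplex ℝ P) (r : P → J)
    (φ : (Fin T₀ → X) → ℝ) :
    ∑ h, algProbHist alg (rewardObsModel r 1) h * φ (fun t => (h t).2.2) = ∑ ω, φ ω := by
  refine sum_prod_prefix_mul_comp (fun z => z.2.2)
    (fun t hist z => alg.dec t hist z.1 * rewardObsModel r 1 z.1 z.2) (fun t hist ψ => ?_) T₀ φ
  have hπ : ∀ π, ∑ o : J × X, rewardObsModel r 1 π o * ψ o.2 = ∑ y, ψ y := fun π => by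
    rw [Fintype.sum_prod_type, sum_comm]
    simp [rewardObsModel]
  rw [Fintype.sum_prod_type]
  simp only [mul_assoc, ← mul_sum, hπ, ← sum_mul, (hdec t hist).2, one_mul]

lemma algProbEvent_rewardObsModel (alg : LBAlg P (J × X) T₀) (r : P → J) (ν : X → ℝ)
    (F : Set (Fin T₀ → P × (J × X))) :
    algProbEvent alg (rewardObsModel r ν) F
      = ∑ h, algProbHist alg (rewardObsModel r 1) h
          * if h ∈ F then ∏ t, ν (h t).2.2 else 0 := by
  refine sum_congr rfl fun h _ => ?_
  rw [algProbHist_rewardObsModel, mul_ite, mul_zero]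

lemma algProbEvent_exists_le_sum {O ι : Type} [Fintype O] [Fintype ι] {alg : LBAlg P O T₀}
    {M : P → O → ℝ} (hM : ∀ h, 0 ≤ algProbHist alg M h)
    (E : ι → (Fin T₀ → P × O) → Prop) :
    algProbEvent alg M {h | ∃ i, E i h} ≤ ∑ i, algProbEvent alg M {h | E i h} := by
  simp only [algProbEvent]
  rw [sum_comm]
  refine sum_le_sum fun h _ => ?_
  split_ifs with hE
  · obtain ⟨i, hi⟩ := hE
    refine le_trans ?_ (single_le_sum (fun j _ => ?_) (mem_univ i))
    · simp [hi]
    · split_ifs <;> simp [hM h]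
  · exact sum_nonneg fun j _ => by split_ifs <;> simp [hM h]

variable {ι : Type} (alg : LBAlg P (J × X) T₀)
  (hdec : ∀ t hist, alg.dec t hist ∈ stdSimplex ℝ P) (r : P → J) (𝒯 : Finset ι)
include hdec

lemma sum_algProbEvent_round_le (ν : ι → X → ℝ) (hν : ∀ T ∈ 𝒯, ∑ x, ν T x = 1)
    (B : ι → P → Prop) (c : ℝ)
    (hB : ∀ π (ω : Fin T₀ → X),
      ∑ T ∈ 𝒯, (if B T π then ∏ t, ν T (ω t) else 0)
        ≤ c * ∑ T ∈ 𝒯, ∏ t, ν T (ω t))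
    (t : Fin T₀) :
    ∑ T ∈ 𝒯, algProbEvent alg (rewardObsModel r (ν T)) {h | B T (h t).1} ≤ c * #𝒯 := by
  have hW := algProbHist_nonneg hdec (rewardObsModel_nonneg (r := r) (ν := 1) fun _ => zero_le_one)
  simp only [algProbEvent_rewardObsModel, Set.mem_ofPred_eq]
  rw [sum_comm]
  calc ∑ h, ∑ T ∈ 𝒯, algProbHist alg (rewardObsModel r 1) h
          * (if B T (h t).1 then ∏ s, ν T (h s).2.2 else 0)
      ≤ ∑ h, algProbHist alg (rewardObsModel r 1) h
          * (c * ∑ T ∈ 𝒯, ∏ s, ν T (h s).2.2) := by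
        refine sum_le_sum fun h _ => ?_
        rw [← mul_sum]
        exact mul_le_mul_of_nonneg_left (hB _ _) (hW h)
    _ = c * #𝒯 := by
        rw [sum_algProbHist_mul alg hdec r (fun ω => c * ∑ T ∈ 𝒯, ∏ s, ν T (ω s)),
          ← mul_sum, sum_comm,
          sum_congr rfl fun T hT => by rw [← Fintype.sum_pow, hν T hT, one_pow]]
        simp

lemma avg_algProbEvent_exists_le (h𝒯 : 𝒯.Nonempty) (ν : ι → X → ℝ)
    (hν0 : ∀ T ∈ 𝒯, ∀ x, 0 ≤ ν T x) (hν : ∀ T ∈ 𝒯, ∑ x, ν T x = 1)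
    (B : ι → P → Prop) (c : ℝ)
    (hB : ∀ π (ω : Fin T₀ → X),
      ∑ T ∈ 𝒯, (if B T π then ∏ t, ν T (ω t) else 0)
        ≤ c * ∑ T ∈ 𝒯, ∏ t, ν T (ω t)) :
    (#𝒯 : ℝ)⁻¹ * ∑ T ∈ 𝒯,
        algProbEvent alg (rewardObsModel r (ν T)) {h | ∃ t, B T (h t).1} ≤ T₀ * c := by
  have h𝒯0 : (0 : ℝ) < #𝒯 := by exact_mod_cast h𝒯.card_pos
  calc _ ≤ (#𝒯 : ℝ)⁻¹ * ∑ t : Fin T₀, ∑ T ∈ 𝒯,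
          algProbEvent alg (rewardObsModel r (ν T)) {h | B T (h t).1} := by
        rw [sum_comm (s := univ)]
        gcongr with T hT
        exact algProbEvent_exists_le_sum
          (algProbHist_nonneg hdec (rewardObsModel_nonneg (hν0 T hT))) _
    _ ≤ (#𝒯 : ℝ)⁻¹ * ∑ _t : Fin T₀, c * #𝒯 := by
        gcongr with t
        exact sum_algProbEvent_round_le alg hdec r 𝒯 ν hν B c hB t
    _ = T₀ * c := by
        rw [sum_const, card_univ, Fintype.card_fin, nsmul_eq_mul]
        field_simp

lemma abs_algProbEvent_sub_mixture_le (ν : X → ℝ) (ρ : ι → X → ℝ) (a : ℝ)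
    (F : Set (Fin T₀ → P × (J × X))) :
    |algProbEvent alg (rewardObsModel r ν) F
        - a * ∑ T ∈ 𝒯, algProbEvent alg (rewardObsModel r (ρ T)) F|
      ≤ ∑ ω : Fin T₀ → X, |∏ t, ν (ω t) - a * ∑ T ∈ 𝒯, ∏ t, ρ T (ω t)| := by
  have hW := algProbHist_nonneg hdec (rewardObsModel_nonneg (r := r) (ν := 1) fun _ => zero_le_one)
  set g : (Fin T₀ → X) → ℝ := fun ω =>
    ∏ t, ν (ω t) - a * ∑ T ∈ 𝒯, ∏ t, ρ T (ω t)
  have hdiff : algProbEvent alg (rewardObsModel r ν) F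
        - a * ∑ T ∈ 𝒯, algProbEvent alg (rewardObsModel r (ρ T)) F
      = ∑ h, algProbHist alg (rewardObsModel r 1) h
          * if h ∈ F then g (fun t => (h t).2.2) else 0 := by
    simp only [algProbEvent_rewardObsModel, mul_sum]
    rw [sum_comm, ← sum_sub_distrib]
    refine sum_congr rfl fun h _ => ?_
    split_ifs <;> simp [g, mul_sub, mul_sum, mul_left_comm]
  rw [hdiff, ← sum_algProbHist_mul alg hdec r fun ω => |g ω|]
  refine (abs_sum_le_sum_abs _ _).trans (sum_le_sum fun h _ => ?_)
  rw [abs_mul, abs_of_nonneg (hW h)]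
  exact mul_le_mul_of_nonneg_left (by split_ifs <;> simp) (hW h)

end Interaction

section Uniform

variable {X : Type} [DecidableEq X] {k m : ℕ}

noncomputable def unifOn (T : Finset X) (x : X) : ℝ := if x ∈ T then (#T : ℝ)⁻¹ else 0

lemma unifOn_nonneg (T : Finset X) (x : X) : 0 ≤ unifOn T x := by
  unfold unifOn; split_ifs <;> positivity

lemma prod_unifOn (T : Finset X) (ω : Fin k → X) :
    ∏ t, unifOn T (ω t) = if univ.image ω ⊆ T then ((#T : ℝ)⁻¹) ^ k else 0 := by
  simp [unifOn, Fintype.prod_ite_zero, image_subset_iff]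

variable [Fintype X]

lemma sum_unifOn {T : Finset X} (hT : T.Nonempty) : ∑ x, unifOn T x = 1 := by
  simp [unifOn, sum_ite_mem, hT.card_pos.ne']

lemma card_injective_mem (T : Finset X) :
    #{ω : Fin k → X | Function.Injective ω ∧ ∀ t, ω t ∈ T} = (#T).descFactorial k := by
  rw [← Fintype.card_subtype]
  refine (Fintype.card_congr (β := Fin k ↪ T) ?_).trans (by simp [Fintype.card_embedding_eq])
  exact
    { toFun := fun ω => ⟨fun t => ⟨ω.1 t, ω.2.2 t⟩,
        fun a b hab => ω.2.1 (congrArg Subtype.val hab)⟩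
      invFun := fun e => ⟨fun t => e t, fun a b hab => e.injective (Subtype.ext hab),
        fun t => (e t).2⟩
      left_inv := fun _ => rfl
      right_inv := fun _ => rfl }

lemma one_sub_sq_div_le_descFactorial_div_pow (hk : k ≤ m) (hm : 0 < m) :
    1 - (k : ℝ) ^ 2 / m ≤ m.descFactorial k / (m : ℝ) ^ k := by
  have hmR : (0 : ℝ) < m := by exact_mod_cast hm
  have hkm : (k : ℝ) ≤ m := by exact_mod_cast hk
  calc 1 - (k : ℝ) ^ 2 / m ≤ 1 + k * ((1 - k) / m) := by
        have : (k : ℝ) * ((1 - k) / m) = k / m - (k : ℝ) ^ 2 / m := by ring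
        linarith [div_nonneg (Nat.cast_nonneg k) hmR.le]
    _ ≤ (1 + (1 - k) / m) ^ k := one_add_mul_le_pow (by rw [le_div_iff₀ hmR]; linarith) k
    _ = (((m + 1 - k : ℕ) : ℝ) / m) ^ k := by
        rw [Nat.cast_sub (by omega)]; push_cast; field_simp; ring
    _ ≤ m.descFactorial k / (m : ℝ) ^ k := by
        rw [div_pow]
        gcongr
        exact_mod_cast Nat.pow_sub_le_descFactorial m k

lemma sum_not_injective_prod_unifOn_le {T : Finset X} (hT : T.Nonempty) (hk : k ≤ #T) :
    ∑ ω : Fin k → X with ¬ Function.Injective ω, ∏ t, unifOn T (ω t)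
      ≤ (k : ℝ) ^ 2 / #T := by
  have htotal : ∑ ω : Fin k → X, ∏ t, unifOn T (ω t) = 1 := by
    rw [← Fintype.sum_pow, sum_unifOn hT, one_pow]
  have hinj : ∑ ω : Fin k → X with Function.Injective ω, ∏ t, unifOn T (ω t)
      = (#T).descFactorial k / (#T : ℝ) ^ k := by
    simp only [prod_unifOn, image_subset_iff, mem_univ, true_implies]
    rw [sum_ite, sum_const_zero, add_zero, sum_const, filter_filter, card_injective_mem,
      nsmul_eq_mul, inv_pow, div_eq_mul_inv]
  have := one_sub_sq_div_le_descFactorial_div_pow hk hT.card_pos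
  rw [← sum_filter_add_sum_filter_not univ Function.Injective, hinj] at htotal
  linarith

lemma sum_abs_sub_le_two_mul_sum_not {ι : Type} [Fintype ι] {u p : ι → ℝ} (S : ι → Prop)
    [DecidablePred S] (hu : ∀ i, 0 ≤ u i) (hp : ∀ i, 0 ≤ p i)
    (hsum : ∑ i, u i = ∑ i, p i)
    (hS : ∀ i, S i → p i ≤ u i) :
    ∑ i, |u i - p i| ≤ 2 * ∑ i with ¬ S i, p i := by
  have hle : ∀ i, |u i - p i| ≤ (u i - p i) + 2 * if S i then 0 else p i := fun i => by
    split_ifs with h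
    · rw [abs_of_nonneg (sub_nonneg.2 (hS i h))]; simp
    · rw [abs_le]; constructor <;> linarith [hu i, hp i]
  calc ∑ i, |u i - p i| ≤ ∑ i, ((u i - p i) + 2 * if S i then 0 else p i) :=
        sum_le_sum fun i _ => hle i
    _ = 2 * ∑ i with ¬ S i, p i := by
        rw [sum_add_distrib, sum_sub_distrib, hsum, sub_self, zero_add, ← mul_sum, sum_filter]
        simp only [ite_not]

lemma choose_sub_mul_pow_le {N : ℕ} (hmN : m ≤ N) :
    ∀ {k}, k ≤ m → (N - k).choose (m - k) * N ^ k ≤ N.choose m * m ^ k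
  | 0, _ => by simp
  | k + 1, hk => by
    have ih := choose_sub_mul_pow_le hmN (k := k) (by omega)
    have hpascal : (N - k) * (N - (k + 1)).choose (m - (k + 1))
        = (N - k).choose (m - k) * (m - k) := by
      have := Nat.add_one_mul_choose_eq (N - (k + 1)) (m - (k + 1))
      rwa [show N - (k + 1) + 1 = N - k by omega, show m - (k + 1) + 1 = m - k by omega] at this
    have hcross : (m - k) * N ≤ (N - k) * m := by
      zify [(by omega : k ≤ m), (by omega : k ≤ N)]; nlinarith
    refine Nat.le_of_mul_le_mul_left ?_ (show 0 < N - k by omega)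
    calc (N - k) * ((N - (k + 1)).choose (m - (k + 1)) * N ^ (k + 1))
        = ((N - k).choose (m - k) * N ^ k) * ((m - k) * N) := by rw [← mul_assoc, hpascal]; ring
      _ ≤ (N.choose m * m ^ k) * ((N - k) * m) := Nat.mul_le_mul ih hcross
      _ = (N - k) * (N.choose m * m ^ (k + 1)) := by ring

lemma sum_ite_prod_unifOn_powersetCard (B : Finset X → Prop) (ω : Fin k → X) :
    ∑ T ∈ powersetCard m univ, (if B T then ∏ t, unifOn T (ω t) else 0)
      = #{T ∈ powersetCard m univ | univ.image ω ⊆ T ∧ B T} * ((m : ℝ)⁻¹) ^ k := by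
  rw [card_eq_sum_ones, Nat.cast_sum, sum_mul, sum_filter]
  refine sum_congr rfl fun T hT => ?_
  rw [prod_unifOn, (mem_powersetCard_univ.1 hT)]
  by_cases hB : B T <;> by_cases hω : univ.image ω ⊆ T <;> simp [hB, hω]

lemma avg_prod_unifOn_le_of_injective (hm : 0 < m) (hk : k ≤ m) (hmX : m ≤ Fintype.card X)
    {ω : Fin k → X} (hω : Function.Injective ω) :
    (#(powersetCard m (univ : Finset X)) : ℝ)⁻¹
        * ∑ T ∈ powersetCard m univ, ∏ t, unifOn T (ω t)
      ≤ ((Fintype.card X : ℝ)⁻¹) ^ k := by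
  have hS : #(univ.image ω) = k := by
    rw [card_image_of_injective _ hω, card_univ, Fintype.card_fin]
  have h := sum_ite_prod_unifOn_powersetCard (m := m) (fun _ => True) ω
  simp only [if_true, and_true] at h
  rw [h, card_filter_powersetCard_subset _ _ _ (subset_univ _) (hS.symm ▸ hk), card_univ, hS,
    card_powersetCard, card_univ]
  have key : ((Fintype.card X - k).choose (m - k) : ℝ) * (Fintype.card X : ℝ) ^ k
      ≤ (Fintype.card X).choose m * (m : ℝ) ^ k := by
    exact_mod_cast choose_sub_mul_pow_le hmX hk
  have hC : (0 : ℝ) < (Fintype.card X).choose m := by exact_mod_cast Nat.choose_pos hmX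
  have hX : (0 : ℝ) < Fintype.card X := by exact_mod_cast hm.trans_le hmX
  rw [inv_pow, inv_pow, ← div_eq_inv_mul, ← div_eq_mul_inv, div_div,
    div_le_iff₀ (by positivity), inv_mul_eq_div, le_div_iff₀ (by positivity)]
  linarith

lemma sum_abs_prod_unifOn_sub_avg_le (hm : 0 < m) (hk : k ≤ m) (hmX : m ≤ Fintype.card X) :
    ∑ ω : Fin k → X, |∏ t, unifOn univ (ω t)
        - (#(powersetCard m (univ : Finset X)) : ℝ)⁻¹
          * ∑ T ∈ powersetCard m univ, ∏ t, unifOn T (ω t)|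
      ≤ 2 * k ^ 2 / m := by
  set 𝒯 := powersetCard m (univ : Finset X)
  have h𝒯 : (0 : ℝ) < #𝒯 := by
    rw [card_powersetCard, card_univ]; exact_mod_cast Nat.choose_pos hmX
  have hcard : ∀ T ∈ 𝒯, #T = m := fun T hT => mem_powersetCard_univ.1 hT
  have hne : ∀ T ∈ 𝒯, T.Nonempty := fun T hT => card_pos.1 (hcard T hT ▸ hm)
  have hsum1 : ∀ T : Finset X, T.Nonempty → ∑ ω : Fin k → X, ∏ t, unifOn T (ω t) = 1 :=
    fun T hT => by rw [← Fintype.sum_pow, sum_unifOn hT, one_pow]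
  refine (sum_abs_sub_le_two_mul_sum_not Function.Injective
    (fun _ => prod_nonneg fun _ _ => unifOn_nonneg _ _)
    (fun _ => mul_nonneg (by positivity) (sum_nonneg fun _ _ => prod_nonneg fun _ _ =>
      unifOn_nonneg _ _)) ?_ (fun ω hω => ?_)).trans ?_
  · rw [hsum1 _ (univ_nonempty_iff.2 (Fintype.card_pos_iff.1 (hm.trans_le hmX))), ← mul_sum,
      sum_comm, sum_congr rfl fun T hT => hsum1 T (hne T hT), sum_const, nsmul_eq_mul, mul_one,
      inv_mul_cancel₀ h𝒯.ne']
  · rw [prod_unifOn, if_pos (subset_univ _), card_univ]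
    exact avg_prod_unifOn_le_of_injective hm hk hmX hω
  · calc _ = 2 * ((#𝒯 : ℝ)⁻¹ * ∑ T ∈ 𝒯,
            ∑ ω : Fin k → X with ¬ Function.Injective ω, ∏ t, unifOn T (ω t)) := by
          rw [← mul_sum, sum_comm]
      _ ≤ 2 * ((#𝒯 : ℝ)⁻¹ * ∑ _T ∈ 𝒯, (k : ℝ) ^ 2 / m) := by
          gcongr with T hT
          rw [← hcard T hT]
          exact sum_not_injective_prod_unifOn_le (hne T hT) (hcard T hT ▸ hk)
      _ = 2 * k ^ 2 / m := by
          rw [sum_const, nsmul_eq_mul]; field_simp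

end Uniform

section Construction

variable {N n q m : ℕ} {Φ₁ Φ₂ : Finset (Fin N) → Fin n → Fin q}

lemma modelT0_eq (T : Finset (Fin N)) :
    modelT0 N n q T = rewardObsModel (ridx0 n q) (unifOn T) := by
  funext π o
  simp only [modelT0, rewardObsModel, unifOn, ite_and]

lemma model0_eq : model0 N n q = rewardObsModel (ridx0 n q) (unifOn univ) := by
  funext π o
  simp [model0, rewardObsModel, unifOn]

lemma card_filter_exists_eq_le {α : Type} (𝒮 : Finset α) (Φ : α → Fin n → Fin q)
    (a b : ℕ) {c : ℝ} (hc : 0 ≤ c)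
    (hΦ : ∀ a₁ a₂, (#{s ∈ 𝒮 | Φ s a₁ = a₂} : ℝ) ≤ c * #𝒮) :
    (#{s ∈ 𝒮 | ∃ i : Fin n, a = i ∧ b = Φ s i} : ℝ) ≤ c * #𝒮 := by
  by_cases hab : a < n ∧ b < q
  · refine le_trans ?_ (hΦ ⟨a, hab.1⟩ ⟨b, hab.2⟩)
    refine Nat.cast_le.2 (card_le_card fun s hs => ?_)
    obtain ⟨hs, i, hi, hb⟩ := mem_filter.1 hs
    obtain rfl : i = ⟨a, hab.1⟩ := Fin.ext hi.symm
    exact mem_filter.2 ⟨hs, Fin.ext hb.symm⟩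
  · rw [filter_false_of_mem fun s _ ⟨i, hi, hb⟩ => hab ⟨hi ▸ i.2, hb ▸ (Φ s i).2⟩]
    simpa using mul_nonneg hc (Nat.cast_nonneg _)

lemma card_filter_inBstar_le (hC2 : Condition2 N n q Φ₁ Φ₂) (hN : 2 ≤ N)
    (hm : m = N / 3 ∨ m = 2 * N / 3) (Q : Finset (Fin N)) (hQ : (#Q : ℝ) ≤ √N)
    (π : JointDec n q) :
    (#{T ∈ powersetCard m univ | Q ⊆ T ∧ inBstar N n q Φ₁ Φ₂ T π} : ℝ)
      ≤ 2 / q * #{T ∈ powersetCard m univ | Q ⊆ T} := by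
  have hfilter : ∀ (m : ℕ) (p : Finset (Fin N) → Prop) [DecidablePred p],
      (univ : Finset (Finset (Fin N))).filter (fun T => #T = m ∧ Q ⊆ T ∧ p T)
        = {T ∈ {T ∈ powersetCard m (univ : Finset (Fin N)) | Q ⊆ T} | p T} := fun m p _ => by
    ext T; simp [and_assoc]
  have hfilter' : ∀ m, univ.filter (fun T : Finset (Fin N) => #T = m ∧ Q ⊆ T)
      = {T ∈ powersetCard m (univ : Finset (Fin N)) | Q ⊆ T} := fun m => by
    ext T; simp
  rw [← filter_filter]
  rcases hm with rfl | rfl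
  · refine (Nat.cast_le.2 (card_le_card fun T hT => ?_)).trans
      (card_filter_exists_eq_le _ Φ₁ π.1 (π.2 - 1) (by positivity) fun a₁ a₂ => ?_)
    · obtain ⟨hT, hB⟩ := mem_filter.1 hT
      rw [inBstar, if_pos (mem_powersetCard_univ.1 (mem_filter.1 hT).1)] at hB
      obtain ⟨i, h1, h2⟩ := hB
      exact mem_filter.2 ⟨hT, i, h1, by omega⟩
    · rw [← hfilter, ← hfilter']; exact hC2.1 Q hQ a₁ a₂
  · refine (Nat.cast_le.2 (card_le_card fun T hT => ?_)).trans
      (card_filter_exists_eq_le _ Φ₂ (π.1 - n) (π.2 - (q + 1)) (by positivity)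
        fun a₁ a₂ => ?_)
    · obtain ⟨hT, hB⟩ := mem_filter.1 hT
      have hcard := mem_powersetCard_univ.1 (mem_filter.1 hT).1
      rw [inBstar, if_neg (by omega)] at hB
      obtain ⟨i, h1, h2⟩ := hB
      exact mem_filter.2 ⟨hT, i, by omega, by omega⟩
    · rw [← hfilter, ← hfilter']; exact hC2.2 Q hQ a₁ a₂

lemma sum_ite_inBstar_prod_unifOn_le (hC2 : Condition2 N n q Φ₁ Φ₂) (hN : 2 ≤ N)
    (hm : m = N / 3 ∨ m = 2 * N / 3) {k : ℕ} (hk : (k : ℝ) ≤ √N) (π : JointDec n q)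
    (ω : Fin k → Fin N) :
    ∑ T ∈ powersetCard m univ,
        (if inBstar N n q Φ₁ Φ₂ T π then ∏ t, unifOn T (ω t) else 0)
      ≤ 2 / q * ∑ T ∈ powersetCard m univ, ∏ t, unifOn T (ω t) := by
  have hall := sum_ite_prod_unifOn_powersetCard (m := m) (fun _ => True) ω
  simp only [if_true, and_true] at hall
  rw [sum_ite_prod_unifOn_powersetCard, hall, ← mul_assoc]
  gcongr
  refine card_filter_inBstar_le hC2 hN hm _ (le_trans ?_ hk) π
  exact_mod_cast card_image_le.trans (by simp)

end Construction

lemma le_and_two_mul_sq_div_le {N m T₀ : ℕ} (hN : 0 < N) (hNm : N ≤ 3 * m)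
    (hT₀ : (T₀ : ℝ) ≤ √N / 25) : T₀ ≤ m ∧ 2 * (T₀ : ℝ) ^ 2 / m ≤ 1 / 100 := by
  have hN1 : (1 : ℝ) ≤ N := by exact_mod_cast hN
  have hNm' : (N : ℝ) ≤ 3 * m := by exact_mod_cast hNm
  have hsq : (T₀ : ℝ) ^ 2 ≤ N / 625 := by
    calc (T₀ : ℝ) ^ 2 ≤ (√N / 25) ^ 2 := pow_le_pow_left₀ (Nat.cast_nonneg _) hT₀ 2
      _ = N / 625 := by rw [div_pow, Real.sq_sqrt (Nat.cast_nonneg _)]; norm_num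
  refine ⟨by exact_mod_cast (show (T₀ : ℝ) ≤ m by nlinarith), ?_⟩
  rw [div_le_div_iff₀ (by linarith) (by norm_num)]
  linarith

/-- Lemma: the hybrid models `M_{T,0}` rarely hit `B*(T)` and
are collectively indistinguishable from `M₀`: there is a universal constant
`C > 0` such that whenever `Φ` satisfies Condition 2 and the algorithm interacts
for `T₀ ≤ √N / C` rounds, for each family `i ∈ {1,2}` (encoded by `c : Bool`,
`true ↔ 𝒯₁`):
(a) `E_{T ∼ Unif(𝒯_i)}[ P^{M_{T,0}}( {π^1,…,π^{T₀}} ∩ B*(T) ≠ ∅ ) ] ≤ 2T₀/q + 1/100`;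
(b) for every (measurable) set `F` of `T₀`-round histories,
`| P^{M₀}(F) − E_{T ∼ Unif(𝒯_i)}[ P^{M_{T,0}}(F) ] | ≤ 1/100`. -/
theorem m0_mt0_close :
    ∃ C : ℝ, 0 < C ∧
      ∀ (N n q : ℕ), 0 < N → N % 3 = 0 → 0 < n →
        ∀ ε : ℝ, 0 < ε → ε < 1 → (n : ℝ) = 2 * N / ε → q = n →
        ∀ Φ₁ Φ₂ : Finset (Fin N) → Fin n → Fin q,
          Condition2 N n q Φ₁ Φ₂ →
          ∀ (T₀ : ℕ) (alg : LBAlg (JointDec n q) (LBObs N) T₀), alg.Valid →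
            (T₀ : ℝ) ≤ Real.sqrt N / C →
            ∀ c : Bool,
              ((1 / ((Finset.univ.filter fun T : Finset (Fin N) =>
                    T.card = (if c then N / 3 else 2 * N / 3)).card : ℝ)) *
                  ∑ T ∈ (Finset.univ.filter fun T : Finset (Fin N) =>
                      T.card = (if c then N / 3 else 2 * N / 3)),
                    algProbEvent alg (modelT0 N n q T)
                      {h | ∃ t : Fin T₀, inBstar N n q Φ₁ Φ₂ T (h t).1} ≤
                2 * T₀ / q + 1 / 100) ∧
              (∀ F : Set (Fin T₀ → JointDec n q × LBObs N),
                |algProbEvent alg (model0 N n q) F -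
                    (1 / ((Finset.univ.filter fun T : Finset (Fin N) =>
                        T.card = (if c then N / 3 else 2 * N / 3)).card : ℝ)) *
                      ∑ T ∈ (Finset.univ.filter fun T : Finset (Fin N) =>
                          T.card = (if c then N / 3 else 2 * N / 3)),
                        algProbEvent alg (modelT0 N n q T) F| ≤ 1 / 100) := by
  refine ⟨25, by norm_num, ?_⟩
  intro N n q hN hN3 _ _ _ _ _ _ Φ₁ Φ₂ hC2 T₀ alg hval hT₀ c
  set m := if c then N / 3 else 2 * N / 3
  have hm : m = N / 3 ∨ m = 2 * N / 3 := by cases c <;> simp [m]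
  have hm0 : 0 < m := by omega
  have hmN : m ≤ N := by omega
  have hT₀N : (T₀ : ℝ) ≤ √N :=
    hT₀.trans (div_le_self (Real.sqrt_nonneg _) (by norm_num))
  obtain ⟨hT₀m, hsmall⟩ := le_and_two_mul_sq_div_le hN (by omega : N ≤ 3 * m) hT₀
  have h𝒯 : (univ.filter fun T : Finset (Fin N) => #T = m) = powersetCard m univ := by
    rw [powersetCard_eq_filter, powerset_univ]
  rw [h𝒯, one_div (#(powersetCard m univ) : ℝ)]
  simp only [modelT0_eq, model0_eq]
  refine ⟨?_, fun F => ?_⟩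
  · calc _ ≤ T₀ * (2 / q : ℝ) :=
          avg_algProbEvent_exists_le alg hval.1 _ _ (powersetCard_nonempty.2 (by simpa))
            unifOn (fun T _ => unifOn_nonneg T)
            (fun T hT => sum_unifOn (card_pos.1 ((mem_powersetCard_univ.1 hT).symm ▸ hm0)))
            _ _ (sum_ite_inBstar_prod_unifOn_le hC2 (by omega) hm hT₀N)
      _ ≤ 2 * T₀ / q + 1 / 100 := by rw [mul_div_assoc', mul_comm]; linarith
  · calc _ ≤ _ := abs_algProbEvent_sub_mixture_le alg hval.1 _ _ _ _ _ F
      _ ≤ 2 * T₀ ^ 2 / m := sum_abs_prod_unifOn_sub_avg_le hm0 hT₀m (by simpa)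
      _ ≤ 1 / 100 := hsmall
end
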